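/- arXiv:2604.09281 — 5 statements merged into one kernel-verified Lean document; each statement's English description precedes it below -/
import Mathlib

section
/- Let d ≥ 1 be an integer, α ∈ (0,1), m > max(0,(d-2)/d), and b := α/(2+d(m-1)) > 0. Then for every η ∈ (0,1) one has ∫_η^1 ( ((1-α)/b) · (∫_{η/σ}^1 τ^{1-d} dτ) + 1 ) · σ^{1+1/b-d} · (1-σ^{1/b})^{-α} dσ = ∫_η^1 (1-σ^{1/b})^{-α} σ^{1-d} dσ. -/
/-!
With `c = 1 / b` and `A σ = ∫_η^σ ρ^(1-d) dρ`, the substitution `τ = ρ / σ` turns the inner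
integral into `σ^(d-2) A σ`, and `(1 - α) c σ^(c-1) (1 - σ^c)^(-α)` is `-v'` for
`v σ = (1 - σ^c)^(1-α)`. Integrating `A · (-v')` by parts leaves no boundary terms, since
`A η = 0` and `v 1 = 0^(1-α) = 0`, so it becomes `∫ σ^(1-d) v`; adding the remaining
term `σ^(1-d) σ^c (1 - σ^c)^(-α)` reassembles the right-hand integrand. The weight
`σ^(c-1) (1 - σ^c)^(-α)` is singular at `σ = 1` but integrable, being the derivative of the
monotone continuous function `-v / ((1 - α) c)`.
-/

open MeasureTheory Set

lemma two_add_mul_sub_one_pos {d m : ℝ} (hd : 0 ≤ d) (hm : max 0 ((d - 2) / d) < m) :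
    0 < 2 + d * (m - 1) := by
  rcases hd.eq_or_lt with rfl | hd
  · norm_num
  · have h := (le_max_right _ _).trans_lt hm
    rw [div_lt_iff₀ hd] at h
    linarith

lemma continuous_one_sub_rpow_rpow {c α : ℝ} (hc : 0 ≤ c) (hα : α ≤ 1) :
    Continuous fun s : ℝ => (1 - s ^ c) ^ (1 - α) :=
  (Real.continuous_rpow_const (sub_nonneg.2 hα)).comp
    (continuous_const.sub (Real.continuous_rpow_const hc))

lemma hasDerivAt_one_sub_rpow_rpow {c α σ : ℝ} (hc : 0 < c) (hσ : σ ∈ Ioo 0 1) :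
    HasDerivAt (fun s => (1 - s ^ c) ^ (1 - α))
      (-((1 - α) * c) * (σ ^ (c - 1) * (1 - σ ^ c) ^ (-α))) σ := by
  have hpos : 0 < 1 - σ ^ c := sub_pos.2 (Real.rpow_lt_one hσ.1.le hσ.2 hc)
  convert ((Real.hasDerivAt_rpow_const (p := c) (Or.inl hσ.1.ne')).const_sub 1).rpow_const
    (p := 1 - α) (Or.inl hpos.ne') using 1
  rw [sub_sub_cancel_left]
  ring

lemma intervalIntegrable_rpow_mul_one_sub_rpow {c α a : ℝ} (hc : 0 < c) (hα : α < 1)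
    (ha : 0 ≤ a) (ha1 : a ≤ 1) :
    IntervalIntegrable (fun σ => σ ^ (c - 1) * (1 - σ ^ c) ^ (-α)) volume a 1 := by
  have hk : 0 < (1 - α) * c := mul_pos (sub_pos.2 hα) hc
  rw [intervalIntegrable_iff_integrableOn_Ioc_of_le ha1, IntegrableOn,
    ← integrable_const_mul_iff hk.ne'.isUnit]
  refine intervalIntegral.integrableOn_deriv_of_nonneg
    (g := -fun s => (1 - s ^ c) ^ (1 - α))
    (continuous_one_sub_rpow_rpow hc.le hα.le).neg.continuousOn
    (fun σ hσ => by
      simpa only [neg_mul, neg_neg] using (hasDerivAt_one_sub_rpow_rpow (α := α) hc ⟨ha.trans_lt hσ.1, hσ.2⟩).neg)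
    (fun σ hσ => ?_)
  have hσ0 : 0 < σ := ha.trans_lt hσ.1
  have hpos : 0 ≤ 1 - σ ^ c := sub_nonneg.2 (Real.rpow_le_one hσ0.le hσ.2.le hc.le)
  positivity

lemma integral_primitive_mul_rpow_mul_one_sub_rpow {f : ℝ → ℝ} {c α a : ℝ} (hc : 0 < c)
    (hα : α < 1) (ha : 0 ≤ a) (ha1 : a ≤ 1) (hf : ContinuousOn f (Icc a 1)) :
    ∫ σ in a..1, (∫ ρ in a..σ, f ρ) * ((1 - α) * c * (σ ^ (c - 1) * (1 - σ ^ c) ^ (-α)))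
      = ∫ σ in a..1, f σ * (1 - σ ^ c) ^ (1 - α) := by
  have hfi : IntervalIntegrable f volume a 1 := hf.intervalIntegrable_of_Icc ha1
  have hA : ContinuousOn (fun σ => ∫ ρ in a..σ, f ρ) (uIcc a 1) :=
    intervalIntegral.continuousOn_primitive_interval (uIcc_of_le ha1 ▸ hf.integrableOn_Icc)
  have hfσ : ∀ σ ∈ Ioo a 1, ContinuousAt f σ :=
    fun σ hσ => hf.continuousAt (Icc_mem_nhds hσ.1 hσ.2)
  have hA' : ∀ σ ∈ Ioo a 1, HasDerivAt (fun σ => ∫ ρ in a..σ, f ρ) (f σ) σ := fun σ hσ =>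
    intervalIntegral.integral_hasDerivAt_right
      ((hf.mono (Icc_subset_Icc_right hσ.2.le)).intervalIntegrable_of_Icc hσ.1.le)
      (ContinuousAt.stronglyMeasurableAtFilter isOpen_Ioo hfσ σ hσ) (hfσ σ hσ)
  have hI : Ioo (min a 1) (max a 1) = Ioo a 1 := by rw [min_eq_left ha1, max_eq_right ha1]
  have ibp := intervalIntegral.integral_mul_deriv_eq_deriv_mul_of_hasDerivAt hA
    (continuous_one_sub_rpow_rpow hc.le hα.le).continuousOn (fun σ hσ => hA' σ (hI ▸ hσ))
    (fun σ hσ => hasDerivAt_one_sub_rpow_rpow hc ⟨ha.trans_lt (hI ▸ hσ).1, (hI ▸ hσ).2⟩) hfi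
    ((intervalIntegrable_rpow_mul_one_sub_rpow hc hα ha ha1).const_mul _)
  have hv1 : (1 - (1 : ℝ) ^ c) ^ (1 - α) = 0 := by
    rw [Real.one_rpow, sub_self, Real.zero_rpow (sub_pos.2 hα).ne']
  rw [intervalIntegral.integral_same, hv1, mul_zero, zero_mul, sub_zero, zero_sub] at ibp
  simpa only [neg_mul, mul_neg, intervalIntegral.integral_neg, neg_inj] using ibp

lemma integral_rpow_div_one {p a σ : ℝ} (ha : 0 ≤ a) (hσ : 0 < σ) :
    ∫ τ in a / σ..1, τ ^ p = σ ^ (-(p + 1)) * ∫ ρ in a..σ, ρ ^ p := by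
  have h := intervalIntegral.integral_comp_div (fun τ => τ ^ p) hσ.ne' (a := a) (b := σ)
  rw [div_self hσ.ne', smul_eq_mul] at h
  have hscale : ∀ x ∈ uIcc a σ, (x / σ) ^ p = σ ^ (-p) * x ^ p := by
    intro x hx
    have hx0 : 0 ≤ x := (le_min ha hσ.le).trans hx.1
    rw [Real.div_rpow hx0 hσ.le, Real.rpow_neg hσ.le, div_eq_inv_mul]
  rw [intervalIntegral.integral_congr hscale, intervalIntegral.integral_const_mul] at h
  rw [Real.rpow_neg hσ.le, Real.rpow_add_one hσ.ne', mul_inv, ← Real.rpow_neg hσ.le, mul_right_comm, h, mul_comm σ, mul_inv_cancel_right₀ hσ.ne']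

theorem integral_kernel_profile {p c α a : ℝ} (hc : 0 < c) (hα : α < 1) (ha : 0 < a)
    (ha1 : a ≤ 1) :
    ∫ σ in Ioo a 1,
        ((1 - α) * c * (∫ τ in Ioo (a / σ) 1, τ ^ p) + 1) * σ ^ (c + p) * (1 - σ ^ c) ^ (-α)
      = ∫ σ in Ioo a 1, (1 - σ ^ c) ^ (-α) * σ ^ p := by
  set w : ℝ → ℝ := fun σ => σ ^ (c - 1) * (1 - σ ^ c) ^ (-α)
  set A : ℝ → ℝ := fun σ => ∫ ρ in a..σ, ρ ^ p
  have hpow : ∀ q : ℝ, ContinuousOn (fun σ : ℝ => σ ^ q) (Icc a 1) := fun q σ hσ =>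
    (Real.continuousAt_rpow_const σ q (Or.inl (ha.trans_le hσ.1).ne')).continuousWithinAt
  have hLHS : ∀ σ ∈ Ioo a 1,
      ((1 - α) * c * (∫ τ in Ioo (a / σ) 1, τ ^ p) + 1) * σ ^ (c + p) * (1 - σ ^ c) ^ (-α)
        = A σ * ((1 - α) * c * w σ) + σ ^ (p + 1) * w σ := by
    intro σ hσ
    have hσ0 : 0 < σ := ha.trans hσ.1
    have e1 : σ ^ (-(p + 1)) * σ ^ (c + p) = σ ^ (c - 1) := by
      rw [← Real.rpow_add hσ0]; congr 1; ring
    have e2 : σ ^ (c + p) = σ ^ (p + 1) * σ ^ (c - 1) := by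
      rw [← Real.rpow_add hσ0]; congr 1; ring
    rw [← integral_Ioc_eq_integral_Ioo,
      ← intervalIntegral.integral_of_le ((div_le_one hσ0).2 hσ.1.le),
      integral_rpow_div_one ha.le hσ0]
    linear_combination ((1 - α) * c * A σ * (1 - σ ^ c) ^ (-α)) * e1 + (1 - σ ^ c) ^ (-α) * e2
  have hRHS : ∀ σ ∈ Ioo a 1, (1 - σ ^ c) ^ (-α) * σ ^ p
      = σ ^ p * (1 - σ ^ c) ^ (1 - α) + σ ^ (p + 1) * w σ := by
    intro σ hσ
    have hσ0 : 0 < σ := ha.trans hσ.1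
    have hpos : 0 < 1 - σ ^ c := sub_pos.2 (Real.rpow_lt_one hσ0.le hσ.2 hc)
    have e1 : (1 - σ ^ c) ^ (1 - α) = (1 - σ ^ c) ^ (-α) * (1 - σ ^ c) := by
      rw [← Real.rpow_add_one hpos.ne']; congr 1; ring
    have e2 : σ ^ (p + 1) * σ ^ (c - 1) = σ ^ p * σ ^ c := by
      rw [← Real.rpow_add hσ0, ← Real.rpow_add hσ0]; congr 1; ring
    linear_combination (-σ ^ p) * e1 - (1 - σ ^ c) ^ (-α) * e2
  have hIcc : uIcc a 1 = Icc a 1 := uIcc_of_le ha1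
  have hwi := intervalIntegrable_rpow_mul_one_sub_rpow hc hα ha.le ha1
  have hAc : ContinuousOn A (uIcc a 1) :=
    intervalIntegral.continuousOn_primitive_interval (hIcc ▸ (hpow p).integrableOn_Icc)
  have hI₁ : IntervalIntegrable (fun σ => A σ * ((1 - α) * c * w σ)) volume a 1 :=
    (hwi.const_mul _).continuousOn_mul hAc
  have hI₂ : IntervalIntegrable (fun σ => σ ^ (p + 1) * w σ) volume a 1 :=
    hwi.continuousOn_mul (hIcc ▸ hpow _)
  have hI₃ : IntervalIntegrable (fun σ => σ ^ p * (1 - σ ^ c) ^ (1 - α)) volume a 1 :=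
    ((hpow p).mul (continuous_one_sub_rpow_rpow hc.le hα.le).continuousOn).intervalIntegrable_of_Icc
      ha1
  rw [setIntegral_congr_fun measurableSet_Ioo hLHS, setIntegral_congr_fun measurableSet_Ioo hRHS,
    ← integral_Ioc_eq_integral_Ioo, ← integral_Ioc_eq_integral_Ioo,
    ← intervalIntegral.integral_of_le ha1, ← intervalIntegral.integral_of_le ha1,
    intervalIntegral.integral_add hI₁ hI₂, intervalIntegral.integral_add hI₃ hI₂,
    integral_primitive_mul_rpow_mul_one_sub_rpow hc hα ha.le ha1 (hpow p)]

theorem kernel_simplification_general (d : ℕ) (α m b : ℝ)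
    (hα : α ∈ Set.Ioo (0:ℝ) 1)
    (hm : m > max 0 (((d:ℝ) - 2) / d))
    (hb : b = α / (2 + (d:ℝ) * (m - 1))) :
    ∀ η ∈ Set.Ioo (0:ℝ) 1,
      (∫ σ in Set.Ioo η 1,
          (((1 - α) / b) * (∫ τ in Set.Ioo (η / σ) 1, τ ^ (1 - (d:ℝ))) + 1)
            * σ ^ (1 + 1 / b - (d:ℝ)) * (1 - σ ^ (1 / b)) ^ (-α))
        = ∫ σ in Set.Ioo η 1, (1 - σ ^ (1 / b)) ^ (-α) * σ ^ (1 - (d:ℝ)) := by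
  intro η hη
  have hb0 : 0 < b := hb ▸ div_pos hα.1 (two_add_mul_sub_one_pos d.cast_nonneg hm)
  have h := integral_kernel_profile (p := 1 - d) (one_div_pos.2 hb0) hα.2 hη.1 hη.2.le
  rw [mul_one_div] at h
  rwa [show 1 + 1 / b - (d : ℝ) = 1 / b + (1 - d) by ring]

/-- simplification of the kernel profile written with the truncated
Newtonian potential `H_d(s) = ∫_s^1 τ^{1-d} dτ` to a single explicit integral. -/
theorem kernel_simplification (d : ℕ) (hd : 1 ≤ d) (α m b : ℝ)
    (hα : α ∈ Set.Ioo (0:ℝ) 1)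
    (hm : m > max 0 (((d:ℝ) - 2) / d))
    (hb : b = α / (2 + (d:ℝ) * (m - 1))) :
    ∀ η ∈ Set.Ioo (0:ℝ) 1,
      (∫ σ in Set.Ioo η 1,
          (((1 - α) / b) * (∫ τ in Set.Ioo (η / σ) 1, τ ^ (1 - (d:ℝ))) + 1)
            * σ ^ (1 + 1 / b - (d:ℝ)) * (1 - σ ^ (1 / b)) ^ (-α))
        = ∫ σ in Set.Ioo η 1, (1 - σ ^ (1 / b)) ^ (-α) * σ ^ (1 - (d:ℝ)) :=
  kernel_simplification_general d α m b hα hm hb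
end

section
/- Let U be a continuous profile solution. Then U is non-increasing on (0,∞); moreover, if 0 < z₁ < z₂ and U(z₂) > 0, then U(z₁) > U(z₂). -/
open MeasureTheory Set Filter

/-- The kernel profile `Q(η) = (1/Γ(1-α)) ∫_η^1 (1-σ^{1/b})^{-α} σ^{1-d} dσ` for
`η ∈ (0,1)`; for `η ≥ 1` the interval `(η,1)` is empty, so `Q(η) = 0`. -/
noncomputable def Qker (d : ℕ) (α b : ℝ) (η : ℝ) : ℝ :=
  (1 / Real.Gamma (1 - α)) *
    ∫ σ in Set.Ioo η 1, (1 - σ ^ (1 / b)) ^ (-α) * σ ^ (1 - (d:ℝ))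

/-- The kernel `K(z,ρ) = ρ·Q(z/ρ)`. -/
noncomputable def Kker (d : ℕ) (α b : ℝ) (z ρ : ℝ) : ℝ := ρ * Qker d α b (z / ρ)

/-- A profile solution: `U : (0,∞) → [0,∞)` with, for every `z > 0`,
`ρ ↦ K(z,ρ)·U(ρ)` integrable on `(z,∞)` and `U(z)^m = ∫_z^∞ K(z,ρ)·U(ρ) dρ`. -/
def IsProfileSolution (d : ℕ) (α b m : ℝ) (U : ℝ → ℝ) : Prop :=
  (∀ z, 0 < z → 0 ≤ U z) ∧
  ∀ z, 0 < z →
    MeasureTheory.IntegrableOn (fun ρ => Kker d α b z ρ * U ρ) (Set.Ioi z) ∧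
    U z ^ m = ∫ ρ in Set.Ioi z, Kker d α b z ρ * U ρ

/-- Lower bound `min p 1 * (1-σ) ≤ 1 - σ^p` for `σ ∈ (0,1)`, `p > 0`. -/
private lemma one_sub_rpow_lb {p σ : ℝ} (hp : 0 < p) (h0 : 0 < σ) (h1 : σ < 1) :
    min p 1 * (1 - σ) ≤ 1 - σ ^ p := by
  rcases le_total p 1 with h | h
  · have hber := rpow_one_add_le_one_add_mul_self (s := σ - 1) (by linarith) hp.le h
    have hσ : (1 : ℝ) + (σ - 1) = σ := by ring
    rw [hσ] at hber
    rw [min_eq_left h]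
    nlinarith
  · have hle : σ ^ p ≤ σ := by
      calc σ ^ p ≤ σ ^ (1:ℝ) := Real.rpow_le_rpow_of_exponent_ge h0 h1.le h
        _ = σ := Real.rpow_one σ
    rw [min_eq_right h]; linarith

private lemma integrand_pos {d : ℕ} {b σ : ℝ} (α : ℝ) (hb : 0 < b)
    (h0 : 0 < σ) (h1 : σ < 1) :
    0 < (1 - σ ^ (1/b)) ^ (-α) * σ ^ (1 - (d:ℝ)) := by
  have h : σ ^ (1/b) < 1 := Real.rpow_lt_one h0.le h1 (by positivity)
  exact mul_pos (Real.rpow_pos_of_pos (by linarith) _) (Real.rpow_pos_of_pos h0 _)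

private lemma integrand_integrableOn {d : ℕ} {α b : ℝ} (hd : 1 ≤ d) (hα0 : 0 < α) (hα1 : α < 1)
    (hb : 0 < b) {η : ℝ} (hη : 0 < η) :
    IntegrableOn (fun σ : ℝ => (1 - σ ^ (1/b)) ^ (-α) * σ ^ (1 - (d:ℝ))) (Set.Ioo η 1) := by
  rcases le_or_gt 1 η with h | h
  · rw [Set.Ioo_eq_empty (not_lt.2 h)]
    exact integrableOn_empty
  have hp : 0 < 1/b := by positivity
  set p := 1/b with hpdef
  set c := min p 1 with hc
  have hcpos : 0 < c := lt_min hp one_pos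
  have hd1 : (1:ℝ) ≤ (d:ℝ) := by exact_mod_cast hd
  set C := c ^ (-α) * η ^ (1 - (d:ℝ)) with hC
  have hgint : IntegrableOn (fun σ : ℝ => C * (1 - σ) ^ (-α)) (Set.Ioo η 1) := by
    have h1 : IntervalIntegrable (fun x : ℝ => x ^ (-α)) volume 0 (1 - η) :=
      intervalIntegral.intervalIntegrable_rpow' (by linarith)
    have h2 := h1.comp_sub_left 1
    simp only [sub_zero, sub_sub_cancel] at h2
    rw [intervalIntegrable_iff, Set.uIoc_comm, Set.uIoc_of_le h.le] at h2
    exact ((h2.mono_set Set.Ioo_subset_Ioc_self).const_mul C)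
  have hmeas : AEStronglyMeasurable
      (fun σ : ℝ => (1 - σ ^ p) ^ (-α) * σ ^ (1 - (d:ℝ)))
      (volume.restrict (Set.Ioo η 1)) := by
    apply ContinuousOn.aestronglyMeasurable _ measurableSet_Ioo
    apply ContinuousOn.mul
    · apply ContinuousOn.rpow_const
      · exact continuousOn_const.sub (continuousOn_id.rpow_const
          (fun x hx => Or.inl (ne_of_gt (hη.trans hx.1))))
      · intro x hx
        have hx0 : 0 < x := hη.trans hx.1
        have : x ^ p < 1 := Real.rpow_lt_one hx0.le hx.2 hp
        exact Or.inl (by linarith)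
    · exact continuousOn_id.rpow_const (fun x hx => Or.inl (ne_of_gt (hη.trans hx.1)))
  apply Integrable.mono' hgint hmeas
  filter_upwards [ae_restrict_mem measurableSet_Ioo] with σ hσ
  have hσ0 : 0 < σ := hη.trans hσ.1
  have hlb : c * (1 - σ) ≤ 1 - σ ^ p := one_sub_rpow_lb hp hσ0 hσ.2
  have hbase : 0 < c * (1 - σ) := mul_pos hcpos (by linarith [hσ.2])
  have h1' : (1 - σ ^ p) ^ (-α) ≤ (c * (1 - σ)) ^ (-α) :=
    Real.rpow_le_rpow_of_nonpos hbase hlb (by linarith)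
  have h2' : σ ^ (1 - (d:ℝ)) ≤ η ^ (1 - (d:ℝ)) :=
    Real.rpow_le_rpow_of_nonpos hη hσ.1.le (by linarith)
  rw [Real.norm_eq_abs, abs_of_nonneg (integrand_pos α hb hσ0 hσ.2).le]
  calc (1 - σ ^ p) ^ (-α) * σ ^ (1 - (d:ℝ))
      ≤ (c * (1 - σ)) ^ (-α) * η ^ (1 - (d:ℝ)) := by
        apply mul_le_mul h1' h2' (Real.rpow_pos_of_pos hσ0 _).le
          (Real.rpow_pos_of_pos hbase _).le
    _ = C * (1 - σ) ^ (-α) := by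
        rw [Real.mul_rpow hcpos.le (by linarith [hσ.2])]; ring

private lemma Qker_nonneg {d : ℕ} {α b : ℝ} (hα1 : α < 1) (hb : 0 < b) {η : ℝ}
    (hη : 0 < η) : 0 ≤ Qker d α b η := by
  unfold Qker
  apply mul_nonneg (one_div_nonneg.2 (Real.Gamma_pos_of_pos (by linarith)).le)
  apply setIntegral_nonneg measurableSet_Ioo
  intro σ hσ
  exact (integrand_pos α hb (hη.trans hσ.1) hσ.2).le

private lemma Qker_pos {d : ℕ} {α b : ℝ} (hd : 1 ≤ d) (hα0 : 0 < α) (hα1 : α < 1) (hb : 0 < b)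
    {η : ℝ} (h0 : 0 < η) (h1 : η < 1) : 0 < Qker d α b η := by
  unfold Qker
  apply mul_pos (one_div_pos.2 (Real.Gamma_pos_of_pos (by linarith)))
  rw [← MeasureTheory.integral_Ioc_eq_integral_Ioo, ← intervalIntegral.integral_of_le h1.le]
  apply intervalIntegral.intervalIntegral_pos_of_pos_on
  · rw [intervalIntegrable_iff_integrableOn_Ioo_of_le h1.le]
    exact integrand_integrableOn hd hα0 hα1 hb h0
  · exact fun x hx => integrand_pos α hb (h0.trans hx.1) hx.2
  · exact h1

private lemma Qker_anti {d : ℕ} {α b : ℝ} (hd : 1 ≤ d) (hα0 : 0 < α) (hα1 : α < 1) (hb : 0 < b)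
    {η₁ η₂ : ℝ} (h0 : 0 < η₁) (h12 : η₁ ≤ η₂) : Qker d α b η₂ ≤ Qker d α b η₁ := by
  unfold Qker
  apply mul_le_mul_of_nonneg_left _
    (one_div_nonneg.2 (Real.Gamma_pos_of_pos (by linarith)).le)
  apply setIntegral_mono_set (integrand_integrableOn hd hα0 hα1 hb h0)
  · filter_upwards [ae_restrict_mem measurableSet_Ioo] with σ hσ
    exact (integrand_pos α hb (h0.trans hσ.1) hσ.2).le
  · exact (Set.Ioo_subset_Ioo_left h12).eventuallyLE

/-- any continuous profile solution is non-increasing on `(0,∞)`, and is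
strictly decreasing as long as it is positive. -/
theorem profile_solution_decreasing (d : ℕ) (hd : 1 ≤ d) (α m b : ℝ)
    (hα : α ∈ Set.Ioo (0:ℝ) 1)
    (hm : m > max 0 (((d:ℝ) - 2) / d))
    (hb : b = α / (2 + (d:ℝ) * (m - 1)))
    (U : ℝ → ℝ)
    (hU : IsProfileSolution d α b m U)
    (hUc : ContinuousOn U (Set.Ioi 0)) :
    AntitoneOn U (Set.Ioi 0) ∧
      ∀ z₁ z₂ : ℝ, 0 < z₁ → z₁ < z₂ → 0 < U z₂ → U z₂ < U z₁ := by
  obtain ⟨hα0, hα1⟩ := hα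
  have hd1 : (1:ℝ) ≤ (d:ℝ) := by exact_mod_cast hd
  have hd0 : (0:ℝ) < (d:ℝ) := by linarith
  have hm0 : 0 < m := lt_of_le_of_lt (le_max_left 0 _) hm
  have hdm : ((d:ℝ) - 2) / d < m := lt_of_le_of_lt (le_max_right 0 _) hm
  have hden : 0 < 2 + (d:ℝ) * (m - 1) := by
    have := (div_lt_iff₀ hd0).1 hdm
    nlinarith
  have hbpos : 0 < b := hb ▸ div_pos hα0 hden
  obtain ⟨hUnn, hUint⟩ := hU
  have hKnn : ∀ z ρ : ℝ, 0 < z → z < ρ → 0 ≤ Kker d α b z ρ := by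
    intro z ρ hz hzρ
    exact mul_nonneg (hz.trans hzρ).le
      (Qker_nonneg hα1 hbpos (div_pos hz (hz.trans hzρ)))
  have hKmono : ∀ z₁ z₂ ρ : ℝ, 0 < z₁ → z₁ ≤ z₂ → z₂ < ρ → Kker d α b z₂ ρ ≤ Kker d α b z₁ ρ := by
    intro z₁ z₂ ρ h1 h12 h2ρ
    have hρ : 0 < ρ := lt_of_le_of_lt (h1.le.trans h12) h2ρ
    apply mul_le_mul_of_nonneg_left _ hρ.le
    exact Qker_anti hd hα0 hα1 hbpos (div_pos h1 hρ) (by gcongr)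
  have step : ∀ z₁ z₂ : ℝ, 0 < z₁ → z₁ < z₂ →
      U z₂ ^ m ≤ ∫ ρ in Set.Ioi z₂, Kker d α b z₁ ρ * U ρ := by
    intro z₁ z₂ h1 h12
    have h2 : 0 < z₂ := h1.trans h12
    rw [(hUint z₂ h2).2]
    apply setIntegral_mono_on (hUint z₂ h2).1
      ((hUint z₁ h1).1.mono_set (Set.Ioi_subset_Ioi h12.le)) measurableSet_Ioi
    intro ρ hρ
    exact mul_le_mul_of_nonneg_right (hKmono z₁ z₂ ρ h1 h12.le hρ) (hUnn ρ (h2.trans hρ))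
  have tail_le : ∀ z₁ z₂ : ℝ, 0 < z₁ → z₁ < z₂ →
      ∫ ρ in Set.Ioi z₂, Kker d α b z₁ ρ * U ρ ≤ U z₁ ^ m := by
    intro z₁ z₂ h1 h12
    rw [(hUint z₁ h1).2]
    apply setIntegral_mono_set (hUint z₁ h1).1
    · filter_upwards [ae_restrict_mem measurableSet_Ioi] with ρ hρ
      exact mul_nonneg (hKnn z₁ ρ h1 hρ) (hUnn ρ (h1.trans hρ))
    · exact (Set.Ioi_subset_Ioi h12.le).eventuallyLE
  have anti : AntitoneOn U (Set.Ioi 0) := by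
    intro z₁ h1 z₂ h2 h12
    rcases eq_or_lt_of_le h12 with rfl | h
    · exact le_refl _
    · have hle : U z₂ ^ m ≤ U z₁ ^ m := (step z₁ z₂ h1 h).trans (tail_le z₁ z₂ h1 h)
      by_contra hlt
      push_neg at hlt
      exact absurd (Real.rpow_lt_rpow (hUnn z₁ h1) hlt hm0) (not_lt.2 hle)
  refine ⟨anti, ?_⟩
  intro z₁ z₂ h1 h12 hpos
  have h2 : 0 < z₂ := h1.trans h12
  have hint1 : IntegrableOn (fun ρ => Kker d α b z₁ ρ * U ρ) (Set.Ioc z₁ z₂) :=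
    (hUint z₁ h1).1.mono_set Set.Ioc_subset_Ioi_self
  have hint2 : IntegrableOn (fun ρ => Kker d α b z₁ ρ * U ρ) (Set.Ioi z₂) :=
    (hUint z₁ h1).1.mono_set (Set.Ioi_subset_Ioi h12.le)
  have hsplit : ∫ ρ in Set.Ioi z₁, Kker d α b z₁ ρ * U ρ
      = (∫ ρ in Set.Ioc z₁ z₂, Kker d α b z₁ ρ * U ρ)
        + ∫ ρ in Set.Ioi z₂, Kker d α b z₁ ρ * U ρ := by
    rw [← MeasureTheory.setIntegral_union (Set.Ioc_disjoint_Ioi le_rfl) measurableSet_Ioi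
      hint1 hint2, Set.Ioc_union_Ioi_eq_Ioi h12.le]
  have hposon : ∀ ρ ∈ Set.Ioo z₁ z₂, 0 < Kker d α b z₁ ρ * U ρ := by
    intro ρ hρ
    have hρ0 : 0 < ρ := h1.trans hρ.1
    have hQ : 0 < Qker d α b (z₁ / ρ) :=
      Qker_pos hd hα0 hα1 hbpos (div_pos h1 hρ0) ((div_lt_one hρ0).2 hρ.1)
    have hUρ : 0 < U ρ :=
      lt_of_lt_of_le hpos (anti (Set.mem_Ioi.2 hρ0) (Set.mem_Ioi.2 h2) hρ.2.le)
    exact mul_pos (mul_pos hρ0 hQ) hUρ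
  have hmid : 0 < ∫ ρ in Set.Ioc z₁ z₂, Kker d α b z₁ ρ * U ρ := by
    rw [← intervalIntegral.integral_of_le h12.le]
    apply intervalIntegral.intervalIntegral_pos_of_pos_on _ hposon h12
    rwa [intervalIntegrable_iff_integrableOn_Ioc_of_le h12.le]
  have hlt : U z₂ ^ m < U z₁ ^ m := by
    calc U z₂ ^ m ≤ ∫ ρ in Set.Ioi z₂, Kker d α b z₁ ρ * U ρ := step z₁ z₂ h1 h12
      _ < (∫ ρ in Set.Ioc z₁ z₂, Kker d α b z₁ ρ * U ρ)
          + ∫ ρ in Set.Ioi z₂, Kker d α b z₁ ρ * U ρ := lt_add_of_pos_left _ hmid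
      _ = ∫ ρ in Set.Ioi z₁, Kker d α b z₁ ρ * U ρ := hsplit.symm
      _ = U z₁ ^ m := ((hUint z₁ h1).2).symm
  by_contra hle
  push_neg at hle
  exact absurd (Real.rpow_le_rpow (hUnn z₁ h1) hle hm0.le) (not_le.2 hlt)
end

section
/- Let d ≥ 1 be an integer, α ∈ (0,1), and b > 0. Let U : (0,∞) → [0,∞) be non-increasing with ρ ↦ ρ^{d-1}·U(ρ) Lebesgue integrable on (0,∞). Then ∫_z^∞ (1-(z/ρ)^{1/b})^{-α} · ρ^{d-1} · U(ρ) dρ tends to ∫_0^∞ ρ^{d-1}·U(ρ) dρ as z → 0⁺. -/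
open MeasureTheory Set Filter Topology

/-!
Write `w_z(ρ) = (1 - (z/ρ)^s)^(-α)` with `s = 1/b` and `g(ρ) = ρ^(d-1) U(ρ)`. Since `w_z ≥ 1`,
the integral is at least `∫_z^∞ g`, which tends to `∫_0^∞ g`. For the upper bound split `(z, ∞)`
at `Kz`. Beyond `Kz` the kernel is at most `w_1(K)`, which tends to `1` as `K → ∞`. On `(z, Kz]`
the kernel integrates, by the scaling `w_z(zt) = w_1(t)`, to `z ∫_1^K w_1`, finite because
`1 - t^(-s) ≥ min s 1 · (1 - 1/t)` and `α < 1`; there `g ≤ K^(d-1) z^(d-1) U(z)` by monotonicity,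
so this piece is `O_K(z^d U(z))`, and `z^d U(z) ≤ 2^d ∫_{z/2}^z g → 0`.
-/

theorem tendsto_of_tendsto_of_le_of_upper_bounds {ι α β : Type*} [Preorder β] [TopologicalSpace β]
    [OrderTopology β] {L : Filter ι} [L.NeBot] {l : Filter α} {f lo : α → β} {hi : ι → α → β}
    {c : ι → β} {a : β} (hlo : Tendsto lo l (𝓝 a)) (hlof : ∀ᶠ x in l, lo x ≤ f x)
    (hfhi : ∀ᶠ K in L, ∀ᶠ x in l, f x ≤ hi K x) (hhi : ∀ K, Tendsto (hi K) l (𝓝 (c K)))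
    (hc : Tendsto c L (𝓝 a)) : Tendsto f l (𝓝 a) := by
  refine tendsto_order.2 ⟨fun u hu => ?_, fun u hu => ?_⟩
  · filter_upwards [(tendsto_order.1 hlo).1 u hu, hlof] with x h₁ h₂ using h₁.trans_le h₂
  · obtain ⟨K, hfK, hcK⟩ := (hfhi.and ((tendsto_order.1 hc).2 u hu)).exists
    filter_upwards [hfK, (tendsto_order.1 (hhi K)).2 u hcK] with x h₁ h₂ using h₁.trans_lt h₂

theorem min_mul_one_sub_le_one_sub_rpow {s x : ℝ} (hs : 0 < s) (hx₀ : 0 ≤ x) (hx₁ : x ≤ 1) :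
    min s 1 * (1 - x) ≤ 1 - x ^ s := by
  rcases le_total s 1 with h | h
  · have := rpow_one_add_le_one_add_mul_self (s := x - 1) (by linarith) hs.le h
    rw [add_sub_cancel] at this
    rw [min_eq_left h]
    linarith
  · have : x ^ s ≤ x := by
      simpa using Real.rpow_le_rpow_of_exponent_ge' hx₀ hx₁ zero_le_one h
    rw [min_eq_right h]
    linarith

noncomputable def fluxKernel (s α z ρ : ℝ) : ℝ := (1 - (z / ρ) ^ s) ^ (-α)

section fluxKernel

variable {s α z ρ K M : ℝ} {g : ℝ → ℝ}

theorem one_sub_rpow_div_pos (hs : 0 < s) (hz : 0 ≤ z) (hzρ : z < ρ) : 0 < 1 - (z / ρ) ^ s := by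
  have := Real.rpow_lt_one (div_nonneg hz (hz.trans hzρ.le))
    ((div_lt_one (hz.trans_lt hzρ)).2 hzρ) hs
  linarith

theorem one_le_fluxKernel (hs : 0 < s) (hα : 0 ≤ α) (hz : 0 ≤ z) (hzρ : z < ρ) :
    1 ≤ fluxKernel s α z ρ :=
  Real.one_le_rpow_of_pos_of_le_one_of_nonpos (one_sub_rpow_div_pos hs hz hzρ)
    (sub_le_self _ (Real.rpow_nonneg (div_nonneg hz (hz.trans hzρ.le)) _)) (neg_nonpos.2 hα)

theorem continuousOn_fluxKernel (hs : 0 < s) (hz : 0 ≤ z) :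
    ContinuousOn (fluxKernel s α z) (Ioi z) := by
  refine ContinuousOn.rpow_const (continuousOn_const.sub ?_)
    fun ρ hρ => Or.inl (one_sub_rpow_div_pos hs hz hρ).ne'
  exact (continuousOn_const.div continuousOn_id fun ρ hρ => (hz.trans_lt hρ).ne').rpow_const
    fun _ _ => Or.inr hs.le

theorem fluxKernel_one_inv_mul : fluxKernel s α 1 (z⁻¹ * ρ) = fluxKernel s α z ρ := by
  rw [fluxKernel, fluxKernel, one_div, mul_inv, inv_inv, div_eq_mul_inv]

theorem fluxKernel_le_fluxKernel_one (hs : 0 < s) (hα : 0 ≤ α) (hK : 1 < K) (hz : 0 < z)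
    (hρ : K * z < ρ) : fluxKernel s α z ρ ≤ fluxKernel s α 1 K := by
  have hρ₀ : 0 < ρ := by nlinarith
  have hdiv : z / ρ ≤ 1 / K := by
    rw [div_le_div_iff₀ hρ₀ (by linarith)]
    linarith
  exact Real.rpow_le_rpow_of_nonpos (one_sub_rpow_div_pos hs zero_le_one hK)
    (by gcongr) (neg_nonpos.2 hα)

theorem tendsto_fluxKernel_one_atTop (hs : 0 < s) :
    Tendsto (fluxKernel s α 1) atTop (𝓝 1) := by
  have hcont : ContinuousAt (fun x : ℝ => (1 - x ^ s) ^ (-α)) 0 :=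
    ((continuousAt_const.sub (Real.continuousAt_rpow_const _ _ (Or.inr hs.le))).rpow_const
      (Or.inl (by simp [Real.zero_rpow hs.ne'])))
  show Tendsto (fun K : ℝ => (1 - (1 / K) ^ s) ^ (-α)) atTop (𝓝 1)
  simpa [Real.zero_rpow hs.ne', Function.comp_def] using
    hcont.tendsto.comp tendsto_inv_atTop_zero

theorem fluxKernel_le_mul_sub_rpow (hs : 0 < s) (hα : 0 ≤ α) (hz : 0 ≤ z) (hzρ : z < ρ)
    (hρK : ρ ≤ K) : fluxKernel s α z ρ ≤ (min s 1 / K) ^ (-α) * (ρ - z) ^ (-α) := by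
  have hρ₀ : 0 < ρ := hz.trans_lt hzρ
  have hc : 0 < min s 1 := lt_min hs one_pos
  have hK₀ : 0 < K := hρ₀.trans_le hρK
  have hx₁ : z / ρ ≤ 1 := (div_le_one hρ₀).2 hzρ.le
  calc fluxKernel s α z ρ ≤ (min s 1 * (1 - z / ρ)) ^ (-α) :=
        Real.rpow_le_rpow_of_nonpos (mul_pos hc (by linarith [(div_lt_one hρ₀).2 hzρ]))
          (min_mul_one_sub_le_one_sub_rpow hs (div_nonneg hz hρ₀.le) hx₁) (neg_nonpos.2 hα)
    _ = (min s 1 / ρ * (ρ - z)) ^ (-α) := by congr 1; field_simp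
    _ ≤ (min s 1 / K * (ρ - z)) ^ (-α) := by
        refine Real.rpow_le_rpow_of_nonpos (by have := sub_pos.2 hzρ; positivity) ?_
          (neg_nonpos.2 hα)
        gcongr
    _ = (min s 1 / K) ^ (-α) * (ρ - z) ^ (-α) :=
        Real.mul_rpow (by positivity) (by linarith)

theorem integrableOn_Ioc_one_fluxKernel (hs : 0 < s) (hα₀ : 0 ≤ α) (hα₁ : α < 1) (hK : 1 ≤ K) :
    IntegrableOn (fluxKernel s α 1) (Ioc 1 K) := by
  have hmaj : IntegrableOn (fun t : ℝ => (t - 1) ^ (-α)) (Ioc 1 K) := by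
    have := (intervalIntegral.intervalIntegrable_rpow' (a := 0) (b := K - 1)
      (by linarith : -1 < -α)).comp_sub_right 1
    rw [zero_add, sub_add_cancel] at this
    exact (intervalIntegrable_iff_integrableOn_Ioc_of_le hK).1 this
  refine (hmaj.const_mul ((min s 1 / K) ^ (-α))).mono'
    (((continuousOn_fluxKernel hs zero_le_one).mono Ioc_subset_Ioi_self).aestronglyMeasurable
      measurableSet_Ioc) ?_
  filter_upwards [ae_restrict_mem measurableSet_Ioc] with t ht
  rw [Real.norm_of_nonneg (zero_le_one.trans (one_le_fluxKernel hs hα₀ zero_le_one ht.1))]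
  exact fluxKernel_le_mul_sub_rpow hs hα₀ zero_le_one ht.1 ht.2

theorem intervalIntegrable_fluxKernel (hs : 0 < s) (hα₀ : 0 ≤ α) (hα₁ : α < 1) (hK : 1 ≤ K) :
    IntervalIntegrable (fluxKernel s α z) volume z (K * z) := by
  have := ((intervalIntegrable_iff_integrableOn_Ioc_of_le hK).2
    (integrableOn_Ioc_one_fluxKernel hs hα₀ hα₁ hK)).comp_mul_left (c := z⁻¹)
  simpa [fluxKernel_one_inv_mul] using this

theorem integral_fluxKernel :
    ∫ ρ in z..K * z, fluxKernel s α z ρ = z * ∫ t in 1..K, fluxKernel s α 1 t := by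
  rcases eq_or_ne z 0 with rfl | hz
  · simp
  simp_rw [← fluxKernel_one_inv_mul (z := z)]
  have hKz : z⁻¹ * (K * z) = K := by field_simp
  rw [intervalIntegral.integral_comp_mul_left _ (inv_ne_zero hz), inv_inv, smul_eq_mul,
    inv_mul_cancel₀ hz, hKz]

theorem setIntegral_Ioc_fluxKernel_mul_le (hs : 0 < s) (hα₀ : 0 ≤ α) (hα₁ : α < 1) (hz : 0 < z)
    (hK : 1 ≤ K) (hg : AEStronglyMeasurable g (volume.restrict (Ioc z (K * z))))
    (hg₀ : ∀ ρ ∈ Ioc z (K * z), 0 ≤ g ρ) (hgM : ∀ ρ ∈ Ioc z (K * z), g ρ ≤ M) :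
    IntegrableOn (fun ρ => fluxKernel s α z ρ * g ρ) (Ioc z (K * z)) ∧
      ∫ ρ in Ioc z (K * z), fluxKernel s α z ρ * g ρ
        ≤ M * (z * ∫ t in 1..K, fluxKernel s α 1 t) := by
  have hzK : z ≤ K * z := le_mul_of_one_le_left hz.le hK
  have hw := (intervalIntegrable_fluxKernel hs hα₀ hα₁ hK (z := z)).1
  have hint : IntegrableOn (fun ρ => fluxKernel s α z ρ * g ρ) (Ioc z (K * z)) := by
    refine hw.mul_bdd (c := M) hg ?_
    filter_upwards [ae_restrict_mem measurableSet_Ioc] with ρ hρ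
    rw [Real.norm_of_nonneg (hg₀ ρ hρ)]
    exact hgM ρ hρ
  refine ⟨hint, ?_⟩
  calc ∫ ρ in Ioc z (K * z), fluxKernel s α z ρ * g ρ
      ≤ ∫ ρ in Ioc z (K * z), fluxKernel s α z ρ * M :=
        setIntegral_mono_on hint (hw.mul_const M) measurableSet_Ioc fun ρ hρ =>
          mul_le_mul_of_nonneg_left (hgM ρ hρ)
            (zero_le_one.trans (one_le_fluxKernel hs hα₀ hz.le hρ.1))
    _ = M * (z * ∫ t in 1..K, fluxKernel s α 1 t) := by
        rw [integral_mul_const, ← intervalIntegral.integral_of_le hzK, integral_fluxKernel,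
          mul_comm]

theorem setIntegral_Ioi_fluxKernel_mul_le (hs : 0 < s) (hα₀ : 0 ≤ α) (hz : 0 < z) (hK : 1 < K)
    (hg : IntegrableOn g (Ioi (K * z))) (hg₀ : ∀ ρ ∈ Ioi (K * z), 0 ≤ g ρ) :
    IntegrableOn (fun ρ => fluxKernel s α z ρ * g ρ) (Ioi (K * z)) ∧
      ∫ ρ in Ioi (K * z), fluxKernel s α z ρ * g ρ
        ≤ fluxKernel s α 1 K * ∫ ρ in Ioi (K * z), g ρ := by
  have hzK : z ≤ K * z := le_mul_of_one_le_left hz.le hK.le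
  have hwK : ∀ ρ ∈ Ioi (K * z), fluxKernel s α z ρ ≤ fluxKernel s α 1 K :=
    fun ρ hρ => fluxKernel_le_fluxKernel_one hs hα₀ hK hz hρ
  have hint : IntegrableOn (fun ρ => fluxKernel s α z ρ * g ρ) (Ioi (K * z)) := by
    refine hg.bdd_mul (c := fluxKernel s α 1 K)
      (((continuousOn_fluxKernel hs hz.le).mono (Ioi_subset_Ioi hzK)).aestronglyMeasurable
        measurableSet_Ioi) ?_
    filter_upwards [ae_restrict_mem measurableSet_Ioi] with ρ hρ
    rw [Real.norm_of_nonneg (zero_le_one.trans (one_le_fluxKernel hs hα₀ hz.le (hzK.trans_lt hρ)))]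
    exact hwK ρ hρ
  refine ⟨hint, ?_⟩
  calc ∫ ρ in Ioi (K * z), fluxKernel s α z ρ * g ρ
      ≤ ∫ ρ in Ioi (K * z), fluxKernel s α 1 K * g ρ :=
        setIntegral_mono_on hint (hg.const_mul _) measurableSet_Ioi fun ρ hρ =>
          mul_le_mul_of_nonneg_right (hwK ρ hρ) (hg₀ ρ hρ)
    _ = fluxKernel s α 1 K * ∫ ρ in Ioi (K * z), g ρ := integral_const_mul _ _

theorem setIntegral_fluxKernel_mul_le (hs : 0 < s) (hα₀ : 0 ≤ α) (hα₁ : α < 1) (hz : 0 < z)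
    (hK : 1 < K) (hg : IntegrableOn g (Ioi z)) (hg₀ : ∀ ρ ∈ Ioi z, 0 ≤ g ρ)
    (hgM : ∀ ρ ∈ Ioc z (K * z), g ρ ≤ M) :
    IntegrableOn (fun ρ => fluxKernel s α z ρ * g ρ) (Ioi z) ∧
      ∫ ρ in Ioi z, fluxKernel s α z ρ * g ρ
        ≤ M * (z * ∫ t in 1..K, fluxKernel s α 1 t) + fluxKernel s α 1 K * ∫ ρ in Ioi z, g ρ := by
  have hzK : z ≤ K * z := le_mul_of_one_le_left hz.le hK.le
  obtain ⟨hint₁, hle₁⟩ := setIntegral_Ioc_fluxKernel_mul_le hs hα₀ hα₁ hz hK.le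
    (hg.mono_set Ioc_subset_Ioi_self).aestronglyMeasurable (fun ρ hρ => hg₀ ρ hρ.1) hgM
  obtain ⟨hint₂, hle₂⟩ := setIntegral_Ioi_fluxKernel_mul_le hs hα₀ hz hK
    (hg.mono_set (Ioi_subset_Ioi hzK)) (fun ρ hρ => hg₀ ρ (hzK.trans_lt hρ))
  have htail : ∫ ρ in Ioi (K * z), g ρ ≤ ∫ ρ in Ioi z, g ρ :=
    setIntegral_mono_set hg ((ae_restrict_mem measurableSet_Ioi).mono hg₀)
      (Ioi_subset_Ioi hzK).eventuallyLE
  have hw₀ : 0 ≤ fluxKernel s α 1 K := zero_le_one.trans (one_le_fluxKernel hs hα₀ zero_le_one hK)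
  have hsplit : ∫ ρ in Ioi z, fluxKernel s α z ρ * g ρ
      = (∫ ρ in Ioc z (K * z), fluxKernel s α z ρ * g ρ)
        + ∫ ρ in Ioi (K * z), fluxKernel s α z ρ * g ρ := by
    rw [← setIntegral_union Ioc_disjoint_Ioi_same measurableSet_Ioi hint₁ hint₂,
      Ioc_union_Ioi_eq_Ioi hzK]
  refine ⟨Ioc_union_Ioi_eq_Ioi hzK ▸ hint₁.union hint₂, ?_⟩
  rw [hsplit]
  linarith [mul_le_mul_of_nonneg_left htail hw₀]

theorem setIntegral_le_setIntegral_fluxKernel_mul (hs : 0 < s) (hα₀ : 0 ≤ α) (hz : 0 ≤ z)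
    (hg : IntegrableOn g (Ioi z)) (hg₀ : ∀ ρ ∈ Ioi z, 0 ≤ g ρ)
    (hint : IntegrableOn (fun ρ => fluxKernel s α z ρ * g ρ) (Ioi z)) :
    ∫ ρ in Ioi z, g ρ ≤ ∫ ρ in Ioi z, fluxKernel s α z ρ * g ρ :=
  setIntegral_mono_on hg hint measurableSet_Ioi fun ρ hρ =>
    le_mul_of_one_le_left (hg₀ ρ hρ) (one_le_fluxKernel hs hα₀ hz hρ)

end fluxKernel

section antitone

variable {U : ℝ → ℝ} {p : ℝ}

theorem rpow_mul_le_of_mem_Ioc (hp : 0 ≤ p) (hU₀ : ∀ ρ, 0 < ρ → 0 ≤ U ρ)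
    (hU : AntitoneOn U (Ioi 0)) {z K ρ : ℝ} (hz : 0 < z) (hρ : ρ ∈ Ioc z (K * z)) :
    ρ ^ p * U ρ ≤ K ^ p * (z ^ p * U z) := by
  have hρ₀ : 0 < ρ := hz.trans hρ.1
  have hK₀ : 0 ≤ K := nonneg_of_mul_nonneg_left (hρ₀.trans_le hρ.2).le hz
  rw [← mul_assoc, ← Real.mul_rpow hK₀ hz.le]
  exact mul_le_mul (Real.rpow_le_rpow hρ₀.le hρ.2 hp) (hU hz hρ₀ hρ.1.le) (hU₀ ρ hρ₀)
    (Real.rpow_nonneg (by positivity) _)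

theorem mul_rpow_mul_le_setIntegral_Ioc (hp : 0 ≤ p) (hU₀ : ∀ ρ, 0 < ρ → 0 ≤ U ρ)
    (hU : AntitoneOn U (Ioi 0)) {z : ℝ} (hz : 0 < z)
    (hint : IntegrableOn (fun ρ => ρ ^ p * U ρ) (Ioc (z / 2) z)) :
    z * (z ^ p * U z) ≤ 2 ^ (p + 1) * ∫ ρ in Ioc (z / 2) z, ρ ^ p * U ρ := by
  have hz₂ : 0 < z / 2 := half_pos hz
  have hconst : z / 2 * ((z / 2) ^ p * U z) ≤ ∫ ρ in Ioc (z / 2) z, ρ ^ p * U ρ :=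
    calc z / 2 * ((z / 2) ^ p * U z) = ∫ _ in Ioc (z / 2) z, (z / 2) ^ p * U z := by
          rw [setIntegral_const, Real.volume_real_Ioc_of_le (by linarith), smul_eq_mul]
          ring
      _ ≤ ∫ ρ in Ioc (z / 2) z, ρ ^ p * U ρ :=
          setIntegral_mono_on (integrableOn_const measure_Ioc_lt_top.ne) hint measurableSet_Ioc
            fun ρ hρ => mul_le_mul (Real.rpow_le_rpow hz₂.le hρ.1.le hp)
              (hU (hz₂.trans hρ.1) hz hρ.2) (hU₀ z hz) (Real.rpow_nonneg (hz₂.trans hρ.1).le _)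
  have hscale : z * (z ^ p * U z) = 2 ^ (p + 1) * (z / 2 * ((z / 2) ^ p * U z)) := by
    rw [Real.div_rpow hz.le zero_le_two, Real.rpow_add_one two_ne_zero]
    field_simp
  rw [hscale]
  exact mul_le_mul_of_nonneg_left hconst (by positivity)

theorem tendsto_mul_rpow_mul_nhdsGT_zero (hp : 0 ≤ p) (hU₀ : ∀ ρ, 0 < ρ → 0 ≤ U ρ)
    (hU : AntitoneOn U (Ioi 0)) (hint : IntegrableOn (fun ρ => ρ ^ p * U ρ) (Ioi 0)) :
    Tendsto (fun z => z * (z ^ p * U z)) (𝓝[>] 0) (𝓝 0) := by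
  set G : ℝ → ℝ := fun z => ∫ ρ in Ioi z, ρ ^ p * U ρ
  have hG : Tendsto G (𝓝[>] 0) (𝓝 (G 0)) :=
    hint.continuousWithinAt_Ici_primitive_Ioi.mono Ioi_subset_Ici_self
  have hhalf : Tendsto (fun z : ℝ => z / 2) (𝓝[>] 0) (𝓝[>] 0) :=
    tendsto_nhdsWithin_of_tendsto_nhds_of_eventually_within _
      (by simpa using ((continuous_id.div_const (2 : ℝ)).tendsto 0).mono_left nhdsWithin_le_nhds)
      (eventually_nhdsWithin_of_forall fun z (hz : 0 < z) => half_pos hz)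
  have hdiff : ∀ z > 0, ∫ ρ in Ioc (z / 2) z, ρ ^ p * U ρ = G (z / 2) - G z := by
    intro z hz
    rw [eq_sub_iff_add_eq, ← setIntegral_union Ioc_disjoint_Ioi_same measurableSet_Ioi
      (hint.mono_set fun ρ hρ => (half_pos hz).trans hρ.1)
      (hint.mono_set (Ioi_subset_Ioi hz.le)), Ioc_union_Ioi_eq_Ioi (half_le_self hz.le)]
  refine tendsto_of_tendsto_of_tendsto_of_le_of_le' tendsto_const_nhds
    (by simpa using ((hG.comp hhalf).sub hG).const_mul (2 ^ (p + 1))) ?_ ?_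
  · filter_upwards [self_mem_nhdsWithin] with z hz
    exact mul_nonneg (le_of_lt hz) (mul_nonneg (Real.rpow_nonneg hz.le _) (hU₀ z hz))
  · filter_upwards [self_mem_nhdsWithin] with z hz
    rw [← hdiff z hz]
    exact mul_rpow_mul_le_setIntegral_Ioc hp hU₀ hU hz
      (hint.mono_set fun ρ hρ => (half_pos hz).trans hρ.1)

end antitone

/-- for a non-increasing nonnegative `U` with `ρ^{d-1}·U(ρ)` integrable on
`(0,∞)`, the weighted integral `∫_z^∞ (1-(z/ρ)^{1/b})^{-α} ρ^{d-1} U(ρ) dρ` tends to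
`∫_0^∞ ρ^{d-1} U(ρ) dρ` as `z → 0⁺`. -/
theorem flux_limit_at_origin (d : ℕ) (hd : 1 ≤ d) (α b : ℝ)
    (hα : α ∈ Set.Ioo (0:ℝ) 1) (hb : 0 < b)
    (U : ℝ → ℝ)
    (hU0 : ∀ ρ, 0 < ρ → 0 ≤ U ρ)
    (hUmono : AntitoneOn U (Set.Ioi 0))
    (hUint : MeasureTheory.IntegrableOn (fun ρ => ρ ^ ((d:ℝ) - 1) * U ρ) (Set.Ioi 0)) :
    Filter.Tendsto
      (fun z : ℝ =>
        ∫ ρ in Set.Ioi z, (1 - (z / ρ) ^ (1 / b)) ^ (-α) * ρ ^ ((d:ℝ) - 1) * U ρ)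
      (nhdsWithin 0 (Set.Ioi 0))
      (nhds (∫ ρ in Set.Ioi (0:ℝ), ρ ^ ((d:ℝ) - 1) * U ρ)) := by
  have hα₀ : 0 ≤ α := hα.1.le
  have hα₁ : α < 1 := hα.2
  have hs : 0 < 1 / b := by positivity
  have hp : 0 ≤ (d : ℝ) - 1 := sub_nonneg.2 (by exact_mod_cast hd)
  set p := (d : ℝ) - 1
  set G : ℝ → ℝ := fun z => ∫ ρ in Ioi z, ρ ^ p * U ρ
  have hG : Tendsto G (𝓝[>] 0) (𝓝 (G 0)) :=
    hUint.continuousWithinAt_Ici_primitive_Ioi.mono Ioi_subset_Ici_self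
  have hg {z : ℝ} (hz : 0 < z) : IntegrableOn (fun ρ => ρ ^ p * U ρ) (Ioi z) :=
    hUint.mono_set (Ioi_subset_Ioi hz.le)
  have hg₀ {z : ℝ} (hz : 0 < z) : ∀ ρ ∈ Ioi z, 0 ≤ ρ ^ p * U ρ := fun ρ hρ =>
    mul_nonneg (Real.rpow_nonneg (hz.trans hρ).le _) (hU0 ρ (hz.trans hρ))
  have hbound {z K : ℝ} (hz : 0 < z) (hK : 1 < K) :=
    setIntegral_fluxKernel_mul_le hs hα₀ hα₁ hz hK (hg hz) (hg₀ hz)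
      fun ρ hρ => rpow_mul_le_of_mem_Ioc hp hU0 hUmono hz hρ
  simp_rw [mul_assoc]
  refine tendsto_of_tendsto_of_le_of_upper_bounds (L := atTop) hG
    (hi := fun K z => K ^ p * (z ^ p * U z) * (z * ∫ t in 1..K, fluxKernel (1 / b) α 1 t)
      + fluxKernel (1 / b) α 1 K * G z)
    (c := fun K => fluxKernel (1 / b) α 1 K * G 0) ?_ ?_ (fun K => ?_) ?_
  · filter_upwards [self_mem_nhdsWithin] with z hz
    exact setIntegral_le_setIntegral_fluxKernel_mul hs hα₀ hz.le (hg hz) (hg₀ hz)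
      (hbound hz one_lt_two).1
  · filter_upwards [eventually_gt_atTop 1] with K hK
    filter_upwards [self_mem_nhdsWithin] with z hz using (hbound hz hK).2
  · convert ((tendsto_mul_rpow_mul_nhdsGT_zero hp hU0 hUmono hUint).const_mul
      (K ^ p * ∫ t in 1..K, fluxKernel (1 / b) α 1 t)).add
      (hG.const_mul (fluxKernel (1 / b) α 1 K)) using 1
    · ext z; ring
    · rw [mul_zero, zero_add]
  · simpa using (tendsto_fluxKernel_one_atTop hs).mul_const (G 0)
end

section
/- Let U be a profile solution and let A > 0. Then the function Ũ : (0,∞) → [0,∞), Ũ(z) := A·U(A^{-(m-1)/2}·z), is also a profile solution. -/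
open MeasureTheory Set Filter

/-- Scaling of the kernel: `K(cz, cρ) = c·K(z,ρ)` for `ρ ≠ 0`. -/
lemma Kker_scale (d : ℕ) (α b : ℝ) (c z ρ : ℝ) (hc : c ≠ 0) (hρ : ρ ≠ 0) :
    Kker d α b (c * z) (c * ρ) = c * Kker d α b z ρ := by
  have h : c * z / (c * ρ) = z / ρ := mul_div_mul_left z ρ hc
  simp only [Kker, h]
  ring

/-- the mass-changing rescaling `Ũ(z) = A·U(A^{-(m-1)/2}·z)` of a profile
solution is again a profile solution. -/
theorem profile_solution_rescaling (d : ℕ) (hd : 1 ≤ d) (α m b : ℝ)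
    (hα : α ∈ Set.Ioo (0:ℝ) 1)
    (hm : m > max 0 (((d:ℝ) - 2) / d))
    (hb : b = α / (2 + (d:ℝ) * (m - 1)))
    (U : ℝ → ℝ)
    (hU : IsProfileSolution d α b m U)
    (A : ℝ) (hA : 0 < A) :
    IsProfileSolution d α b m (fun z => A * U (A ^ (-(m - 1) / 2) * z)) := by
  obtain ⟨hU0, hUeq⟩ := hU
  set c : ℝ := A ^ (-(m - 1) / 2) with hc
  have hcpos : 0 < c := Real.rpow_pos_of_pos hA _
  constructor
  · intro z hz
    exact mul_nonneg hA.le (hU0 _ (mul_pos hcpos hz))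
  intro z hz
  have hcz : 0 < c * z := mul_pos hcpos hz
  obtain ⟨hint, heq⟩ := hUeq (c * z) hcz
  -- key constant identity : A ^ m * (c * c) = A
  have hconst : A ^ m * (c * c) = A := by
    rw [hc, ← Real.rpow_add hA, ← Real.rpow_add hA]
    rw [show m + (-(m - 1) / 2 + -(m - 1) / 2) = 1 by ring, Real.rpow_one]
  -- integrand equality on Ioi z
  have hEq : ∀ ρ ∈ Ioi z,
      Kker d α b (c * z) (c * ρ) * U (c * ρ) =
        c / A * (Kker d α b z ρ * (A * U (c * ρ))) := by
    intro ρ hρ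
    have hρpos : 0 < ρ := hz.trans hρ
    rw [Kker_scale d α b c z ρ hcpos.ne' hρpos.ne']
    field_simp
  -- integrability
  constructor
  · have h1 : IntegrableOn (fun ρ => Kker d α b (c * z) (c * ρ) * U (c * ρ)) (Ioi z) := by
      have := (integrableOn_Ioi_comp_mul_left_iff
        (fun ρ => Kker d α b (c * z) ρ * U ρ) z hcpos).mpr hint
      exact this
    have h2 : IntegrableOn
        (fun ρ => c / A * (Kker d α b z ρ * (A * U (c * ρ)))) (Ioi z) := by
      refine (integrableOn_congr_fun hEq measurableSet_Ioi).mp h1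
    have h3 := h2.const_mul (A / c)
    refine IntegrableOn.congr_fun h3 (fun ρ _ => ?_) measurableSet_Ioi
    field_simp
  · -- the integral identity
    have hsub : (∫ ρ in Ioi (c * z), Kker d α b (c * z) ρ * U ρ)
        = c • ∫ ρ in Ioi z, Kker d α b (c * z) (c * ρ) * U (c * ρ) := by
      rw [integral_comp_mul_left_Ioi (fun ρ => Kker d α b (c * z) ρ * U ρ) z hcpos]
      rw [smul_smul, mul_inv_cancel₀ hcpos.ne', one_smul]
    have hU0' : 0 ≤ U (c * z) := hU0 _ hcz
    calc (A * U (c * z)) ^ m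
        = A ^ m * U (c * z) ^ m := Real.mul_rpow hA.le hU0'
      _ = A ^ m * ∫ ρ in Ioi (c * z), Kker d α b (c * z) ρ * U ρ := by rw [heq]
      _ = A ^ m * (c • ∫ ρ in Ioi z, Kker d α b (c * z) (c * ρ) * U (c * ρ)) := by
          rw [hsub]
      _ = A ^ m * (c • ∫ ρ in Ioi z, c / A * (Kker d α b z ρ * (A * U (c * ρ)))) := by
          rw [setIntegral_congr_fun measurableSet_Ioi hEq]
      _ = ∫ ρ in Ioi z, Kker d α b z ρ * (A * U (c * ρ)) := by
          rw [integral_const_mul, smul_eq_mul]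
          rw [show A ^ m * (c * (c / A * ∫ ρ in Ioi z, Kker d α b z ρ * (A * U (c * ρ))))
              = A ^ m * (c * c) / A * ∫ ρ in Ioi z, Kker d α b z ρ * (A * U (c * ρ)) by ring]
          rw [hconst, div_self hA.ne', one_mul]
end

section
/- Assume m > 1 and let z₀ > 0. Let U₁, U₂ : (0,∞) → [0,∞) be continuous functions such that for each i and every z > z₀ the function ρ ↦ K(z,ρ)·U_i(ρ) is Lebesgue integrable on (z,∞) and U_i(z)^m = ∫_z^∞ K(z,ρ)·U_i(ρ) dρ, and suppose the support of U₁ equals [0,R] for some R ∈ (z₀,∞). If U₁(z₀) = U₂(z₀), then U₁(z) = U₂(z) for all z ≥ z₀. -/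
/-!
Solutions of `U(z)^m = ∫_z^∞ K(z,ρ) U(ρ) dρ` are nonincreasing, and since `K` is positive, antitone
in `z` and homogeneous of degree one, `z ↦ l^{-2/(m-1)} U(l z)` is again a solution for every
`l ≥ 1`. Let `V` be a solution whose support ends no later than that of the other solution `B`, and
slide this family of rescalings of `V` down under `B`. The smallest admissible `l` is `1`: at a
larger one the rescaled `V` lies strictly below `B` at `z₀`, so a contact point inside its support
would give equality from that point on (positivity of the kernel), and then back to `z₀` by a
backward Gronwall argument, since `x ↦ x^m` has slope bounded below where the rescaled `V` is
bounded away from zero. Hence `V ≤ B` with equality at `z₀`, and positivity of the kernel forces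
`V = B`.
-/

open MeasureTheory Set Filter

lemma le_of_forall_Ioo_le_of_continuousAt {f g : ℝ → ℝ} {a b : ℝ} (hf : ContinuousAt f a)
    (hg : ContinuousAt g a) (hab : a < b) (h : ∀ y ∈ Ioo a b, f y ≤ g y) : f a ≤ g a :=
  ContinuousWithinAt.closure_le (by simp [closure_Ioo hab.ne, hab.le]) hf.continuousWithinAt
    hg.continuousWithinAt h

lemma eq_of_forall_gt_eq_of_continuousAt {f : ℝ → ℝ} {a c : ℝ} (hf : ContinuousAt f a)
    (h : ∀ y, a < y → f y = c) : f a = c :=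
  tendsto_nhds_unique (hf.tendsto.mono_left (nhdsWithin_le_nhds (s := Ioi a)))
    (tendsto_const_nhds.congr' (eventually_nhdsWithin_of_forall fun y hy => (h y hy).symm))

lemma mul_rpow_sub_one_mul_sub_le {m v a c : ℝ} (hm : 1 ≤ m) (hv : 0 < v) (hva : v ≤ a)
    (hac : a ≤ c) : m * v ^ (m - 1) * (c - a) ≤ c ^ m - a ^ m := by
  rcases hac.eq_or_lt with rfl | hac
  · simp
  have ha : 0 < a := hv.trans_le hva
  have hslope := (convexOn_rpow hm).le_slope_of_hasDerivAt (mem_Ici.mpr ha.le)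
    (mem_Ici.mpr (ha.trans hac).le) hac (Real.hasDerivAt_rpow_const (Or.inl ha.ne'))
  rw [slope_def_field, le_div_iff₀ (sub_pos.mpr hac)] at hslope
  calc m * v ^ (m - 1) * (c - a) ≤ m * a ^ (m - 1) * (c - a) := by gcongr
    _ ≤ c ^ m - a ^ m := hslope

section Gronwall

variable {g : ℝ → ℝ} {a b L : ℝ}

lemma eqOn_zero_of_le_mul_integral_of_eqOn_zero (hg : ContinuousOn g (Ioc a b))
    (hL : 0 ≤ L) (h : ∀ y ∈ Ioc a b, g y ≤ L * ∫ ρ in y..b, g ρ) {t y : ℝ} (htb : t ≤ b)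
    (hay : a < y) (hyt : y ≤ t) (hLt : L * (t - y) < 1) (hzero : ∀ x ∈ Ioc t b, g x = 0)
    (hg₀ : ∀ x ∈ Icc y t, 0 ≤ g x) : ∀ x ∈ Icc y t, g x = 0 := by
  have hsub : ∀ {u}, y ≤ u → Icc u b ⊆ Ioc a b := fun hu x hx =>
    ⟨hay.trans_le (hu.trans hx.1), hx.2⟩
  obtain ⟨x, hx, hmax⟩ := isCompact_Icc.exists_isMaxOn (nonempty_Icc.mpr hyt)
    (hg.mono ((Icc_subset_Icc_right htb).trans (hsub le_rfl)))
  have hgx : g x ≤ L * (t - y) * g x := by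
    have hint : ∀ {u v}, y ≤ u → u ≤ v → v ≤ b → IntervalIntegrable g volume u v :=
      fun hu huv hv =>
        (hg.mono ((Icc_subset_Icc_right hv).trans (hsub hu))).intervalIntegrable_of_Icc huv
    have htail : ∫ ρ in t..b, g ρ = 0 := by
      rw [intervalIntegral.integral_of_le htb]
      exact setIntegral_eq_zero_of_forall_eq_zero hzero
    have hhead : ∫ ρ in x..t, g ρ ≤ (t - x) * g x := by
      calc ∫ ρ in x..t, g ρ ≤ ∫ _ in x..t, g x :=
            intervalIntegral.integral_mono_on hx.2 (hint hx.1 hx.2 htb) intervalIntegrable_const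
              fun ρ hρ => hmax ⟨hx.1.trans hρ.1, hρ.2⟩
        _ = (t - x) * g x := by rw [intervalIntegral.integral_const, smul_eq_mul]
    calc g x ≤ L * ∫ ρ in x..b, g ρ := h x (hsub hx.1 ⟨le_rfl, hx.2.trans htb⟩)
      _ = L * ∫ ρ in x..t, g ρ := by
          rw [← intervalIntegral.integral_add_adjacent_intervals (hint hx.1 hx.2 htb)
            (hint hyt htb le_rfl), htail, add_zero]
      _ ≤ L * ((t - x) * g x) := mul_le_mul_of_nonneg_left hhead hL
      _ ≤ L * (t - y) * g x := by
          rw [← mul_assoc]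
          exact mul_le_mul_of_nonneg_right (mul_le_mul_of_nonneg_left (by linarith [hx.1]) hL)
            (hg₀ x hx)
  have hx0 : g x ≤ 0 := by nlinarith [hg₀ x hx]
  exact fun x' hx' => le_antisymm ((hmax hx').trans hx0) (hg₀ x' hx')

lemma eqOn_zero_of_le_mul_integral (hg : ContinuousOn g (Ioc a b))
    (hg₀ : ∀ y ∈ Ioc a b, 0 ≤ g y) (hL : 0 ≤ L)
    (h : ∀ y ∈ Ioc a b, g y ≤ L * ∫ ρ in y..b, g ρ) : ∀ y ∈ Ioc a b, g y = 0 := by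
  set δ := 1 / (L + 1)
  have hδ : 0 < δ := by positivity
  have hLδ : L * δ < 1 := by
    rw [mul_one_div, div_lt_one (by linarith)]
    linarith
  have hstep : ∀ k : ℕ, ∀ y ∈ Ioc a b, b - k * δ < y → g y = 0 := by
    intro k
    induction k with
    | zero => exact fun y hy hby => absurd hy.2 (by simpa using hby)
    | succ k ih =>
      intro y hy hky
      by_cases hyk : b - k * δ < y
      · exact ih y hy hyk
      have htb : b - k * δ ≤ b := sub_le_self b (by positivity)
      have hyt : y ≤ b - k * δ := not_lt.mp hyk
      push_cast at hky
      refine eqOn_zero_of_le_mul_integral_of_eqOn_zero hg hL h htb hy.1 hyt ?_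
        (fun x hx => ih x ⟨hy.1.trans (hyt.trans_lt hx.1), hx.2⟩ hx.1)
        (fun x hx => hg₀ x ⟨hy.1.trans_le hx.1, hx.2.trans htb⟩) y ⟨le_rfl, hyt⟩
      calc L * (b - k * δ - y) ≤ L * δ := mul_le_mul_of_nonneg_left (by linarith) hL
        _ < 1 := hLδ
  intro y hy
  obtain ⟨k, hk⟩ := exists_nat_gt ((b - a) / δ)
  exact hstep k y hy (by linarith [(div_lt_iff₀ hδ).mp hk, hy.1])

end Gronwall

section QkerIntegrand

variable {d : ℕ} {α b σ : ℝ}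

lemma integrableOn_one_sub_rpow_neg (hα : α < 1) :
    IntegrableOn (fun σ : ℝ => (1 - σ) ^ (-α)) (Ioo 0 1) := by
  have h := (intervalIntegral.intervalIntegrable_rpow' (r := -α) (a := 0) (b := 1)
    (by linarith)).comp_sub_left 1
  simp only [sub_zero, sub_self] at h
  exact (intervalIntegrable_iff_integrableOn_Ioo_of_le zero_le_one).mp h.symm

lemma one_sub_rpow_one_div_pos (hb : 0 < b) (hσ₀ : 0 < σ) (hσ₁ : σ < 1) : 0 < 1 - σ ^ (1 / b) := by
  linarith [Real.rpow_lt_one hσ₀.le hσ₁ (one_div_pos.mpr hb)]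

lemma Qker_integrand_pos (hb : 0 < b) (hσ₀ : 0 < σ) (hσ₁ : σ < 1) :
    0 < (1 - σ ^ (1 / b)) ^ (-α) * σ ^ (1 - (d : ℝ)) :=
  mul_pos (Real.rpow_pos_of_pos (one_sub_rpow_one_div_pos hb hσ₀ hσ₁) _)
    (Real.rpow_pos_of_pos hσ₀ _)

lemma integrableOn_Qker_integrand (hα : 0 ≤ α) (hα₁ : α < 1) (hb : 0 < b) (hb₁ : b ≤ 1)
    {η : ℝ} (hη : 0 < η) :
    IntegrableOn (fun σ : ℝ => (1 - σ ^ (1 / b)) ^ (-α) * σ ^ (1 - (d : ℝ))) (Ioo η 1) := by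
  have hfirst : IntegrableOn (fun σ : ℝ => (1 - σ ^ (1 / b)) ^ (-α)) (Ioo 0 1) := by
    refine (integrableOn_one_sub_rpow_neg hα₁).mono'
      (Measurable.aestronglyMeasurable (by fun_prop)) ?_
    filter_upwards [ae_restrict_mem measurableSet_Ioo] with σ ⟨hσ₀, hσ₁⟩
    have hle : σ ^ (1 / b) ≤ σ := by
      simpa using Real.rpow_le_rpow_of_exponent_ge hσ₀ hσ₁.le (one_le_one_div hb hb₁)
    rw [Real.norm_of_nonneg (Real.rpow_nonneg (one_sub_rpow_one_div_pos hb hσ₀ hσ₁).le _)]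
    exact Real.rpow_le_rpow_of_nonpos (by linarith) (by linarith) (by linarith)
  have hIcc : IntegrableOn (fun σ : ℝ => (1 - σ ^ (1 / b)) ^ (-α)) (Icc η 1) :=
    (integrableOn_Icc_iff_integrableOn_Ioo).mpr (hfirst.mono_set (Ioo_subset_Ioo_left hη.le))
  refine (hIcc.mul_continuousOn ?_ isCompact_Icc).mono_set Ioo_subset_Icc_self
  exact fun σ hσ =>
    (Real.continuousAt_rpow_const σ _ (Or.inl (hη.trans_le hσ.1).ne')).continuousWithinAt

end QkerIntegrand

section Qker

variable {d : ℕ} {α b : ℝ}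

lemma Qker_pos_s12 (hα : 0 ≤ α) (hα₁ : α < 1) (hb : 0 < b) (hb₁ : b ≤ 1) {η : ℝ} (hη : 0 < η)
    (hη₁ : η < 1) : 0 < Qker d α b η := by
  refine mul_pos (one_div_pos.mpr (Real.Gamma_pos_of_pos (by linarith))) ?_
  rw [← integral_Ioc_eq_integral_Ioo, ← intervalIntegral.integral_of_le hη₁.le]
  refine intervalIntegral.intervalIntegral_pos_of_pos_on ?_
    (fun σ hσ => Qker_integrand_pos hb (hη.trans hσ.1) hσ.2) hη₁
  exact (intervalIntegrable_iff_integrableOn_Ioo_of_le hη₁.le).mpr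
    (integrableOn_Qker_integrand hα hα₁ hb hb₁ hη)

lemma Qker_antitoneOn (hα : 0 ≤ α) (hα₁ : α < 1) (hb : 0 < b) (hb₁ : b ≤ 1) :
    AntitoneOn (Qker d α b) (Ioi 0) := by
  intro η hη η' _ hηη'
  refine mul_le_mul_of_nonneg_left ?_
    (one_div_nonneg.mpr (Real.Gamma_pos_of_pos (by linarith)).le)
  refine setIntegral_mono_set (integrableOn_Qker_integrand hα hα₁ hb hb₁ hη) ?_
    (Ioo_subset_Ioo_left hηη').eventuallyLE
  filter_upwards [ae_restrict_mem measurableSet_Ioo] with σ hσ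
  exact (Qker_integrand_pos hb (lt_trans hη hσ.1) hσ.2).le

end Qker

structure IsProfileKernel (K : ℝ → ℝ → ℝ) : Prop where
  pos : ∀ ⦃z ρ⦄, 0 < z → z < ρ → 0 < K z ρ
  antitone_left : ∀ ⦃z z' ρ⦄, 0 < z → z ≤ z' → z' < ρ → K z' ρ ≤ K z ρ
  homogeneous : ∀ ⦃l⦄, 0 < l → ∀ z ρ, K (l * z) (l * ρ) = l * K z ρ

lemma isProfileKernel_Kker {d : ℕ} {α b : ℝ} (hα : 0 ≤ α) (hα₁ : α < 1) (hb : 0 < b)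
    (hb₁ : b ≤ 1) : IsProfileKernel (Kker d α b) where
  pos z ρ hz hzρ := by
    have hρ : 0 < ρ := hz.trans hzρ
    exact mul_pos hρ (Qker_pos_s12 hα hα₁ hb hb₁ (div_pos hz hρ) ((div_lt_one hρ).mpr hzρ))
  antitone_left z z' ρ hz hzz' hz'ρ := by
    have hρ : 0 < ρ := (hz.trans_le hzz').trans hz'ρ
    exact mul_le_mul_of_nonneg_left (Qker_antitoneOn hα hα₁ hb hb₁ (div_pos hz hρ)
      (div_pos (hz.trans_le hzz') hρ) (by gcongr)) hρ.le
  homogeneous l hl z ρ := by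
    simp only [Kker, mul_div_mul_left _ _ hl.ne']
    ring

namespace IsProfileKernel

variable {K : ℝ → ℝ → ℝ} (hK : IsProfileKernel K) {z ρ : ℝ}
include hK

lemma nonneg (hz : 0 < z) (hzρ : z < ρ) : 0 ≤ K z ρ := (hK.pos hz hzρ).le

lemma eq_mul_apply_div_one (hρ : 0 < ρ) : K z ρ = ρ * K (z / ρ) 1 := by
  simpa [mul_div_cancel₀ z hρ.ne'] using hK.homogeneous hρ (z / ρ) 1

lemma exists_upper_bound {z₁ M : ℝ} (hz₁ : 0 < z₁) (hz₁M : z₁ < M) :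
    ∃ C, 0 ≤ C ∧ ∀ z ρ, z₁ ≤ z → z < ρ → ρ ≤ M → K z ρ ≤ C := by
  have hM : 0 < M := hz₁.trans hz₁M
  refine ⟨M * K (z₁ / M) 1,
    mul_nonneg hM.le (hK.nonneg (div_pos hz₁ hM) ((div_lt_one hM).mpr hz₁M)),
    fun z ρ hz hzρ hρM => ?_⟩
  have hρ : 0 < ρ := (hz₁.trans_le hz).trans hzρ
  rw [hK.eq_mul_apply_div_one hρ]
  refine mul_le_mul hρM (hK.antitone_left (div_pos hz₁ hM) ?_ ((div_lt_one hρ).mpr hzρ))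
    (hK.nonneg (div_pos (hz₁.trans_le hz) hρ) ((div_lt_one hρ).mpr hzρ)) hM.le
  calc z₁ / M ≤ z₁ / ρ := by gcongr
    _ ≤ z / ρ := by gcongr

lemma exists_pos_lower_bound {z₁ p : ℝ} (hz₁ : 0 < z₁) (hz₁p : z₁ < p) :
    ∃ c > 0, ∀ z ρ, 0 < z → z ≤ z₁ → p ≤ ρ → c ≤ K z ρ := by
  have hp : 0 < p := hz₁.trans hz₁p
  have hz₁p' : z₁ / p < 1 := (div_lt_one hp).mpr hz₁p
  refine ⟨p * K (z₁ / p) 1, mul_pos hp (hK.pos (div_pos hz₁ hp) hz₁p'),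
    fun z ρ hz hzz₁ hpρ => ?_⟩
  have hρ : 0 < ρ := hp.trans_le hpρ
  rw [hK.eq_mul_apply_div_one hρ]
  refine mul_le_mul hpρ (hK.antitone_left (div_pos hz hρ) ?_ hz₁p')
    (hK.nonneg (div_pos hz₁ hp) hz₁p') hρ.le
  calc z / ρ ≤ z₁ / ρ := by gcongr
    _ ≤ z₁ / p := by gcongr

lemma exists_pos_le_integral {f : ℝ → ℝ} {z₁ w : ℝ} (hz₁ : 0 < z₁) (hz₁w : z₁ < w)
    (hf : ContinuousAt f w) (hfw : 0 < f w) :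
    ∃ c > 0, ∀ z, 0 < z → z ≤ z₁ → (∀ ρ, z < ρ → 0 ≤ f ρ) →
      IntegrableOn (fun ρ => K z ρ * f ρ) (Ioi z) → c ≤ ∫ ρ in Ioi z, K z ρ * f ρ := by
  obtain ⟨z₂, hz₁z₂, hz₂w⟩ := exists_between hz₁w
  obtain ⟨κ, hκ, hκK⟩ := hK.exists_pos_lower_bound hz₁ hz₁z₂
  obtain ⟨p, q, hw, hsub⟩ := mem_nhds_iff_exists_Ioo_subset.mp <|
    inter_mem (hf.eventually (lt_mem_nhds (half_lt_self hfw))) (Ioi_mem_nhds hz₂w)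
  have hpq : p < q := hw.1.trans hw.2
  refine ⟨κ * (f w / 2) * (q - p), by have := sub_pos.mpr hpq; positivity,
    fun z hz hzz₁ hf₀ hint => ?_⟩
  have hsubz : Ioo p q ⊆ Ioi z := fun ρ hρ => (hzz₁.trans_lt hz₁z₂).trans (hsub hρ).2
  calc κ * (f w / 2) * (q - p) = ∫ _ in Ioo p q, κ * (f w / 2) := by
        rw [setIntegral_const, Real.volume_real_Ioo_of_le hpq.le, smul_eq_mul, mul_comm]
    _ ≤ ∫ ρ in Ioo p q, K z ρ * f ρ := by
        refine setIntegral_mono_on (integrableOn_const measure_Ioo_lt_top.ne)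
          (hint.mono_set hsubz) measurableSet_Ioo fun ρ hρ => ?_
        exact mul_le_mul (hκK z ρ hz hzz₁ (hsub hρ).2.le) (hsub hρ).1.out.le (by positivity)
          (hK.nonneg hz (hsubz hρ))
    _ ≤ ∫ ρ in Ioi z, K z ρ * f ρ := by
        refine setIntegral_mono_set hint ?_ hsubz.eventuallyLE
        filter_upwards [ae_restrict_mem measurableSet_Ioi] with ρ hρ
        exact mul_nonneg (hK.nonneg hz hρ) (hf₀ ρ hρ)

end IsProfileKernel

structure IsProfileSolution_s12 (K : ℝ → ℝ → ℝ) (m z₀ : ℝ) (U : ℝ → ℝ) : Prop where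
  continuousOn : ContinuousOn U (Ioi 0)
  nonneg : ∀ z, 0 < z → 0 ≤ U z
  integrableOn : ∀ z, z₀ < z → IntegrableOn (fun ρ => K z ρ * U ρ) (Ioi z)
  rpow_eq : ∀ z, z₀ < z → U z ^ m = ∫ ρ in Ioi z, K z ρ * U ρ

/-- The exponent `2 / (m - 1)` balances the factor `l²` produced by the homogeneity of the kernel
and the substitution `ρ ↦ l ρ` in the profile equation. -/
noncomputable def profileRescale (m l : ℝ) (U : ℝ → ℝ) (z : ℝ) : ℝ :=
  l ^ (-(2 / (m - 1))) * U (l * z)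

namespace IsProfileSolution_s12

variable {K : ℝ → ℝ → ℝ} {m z₀ : ℝ} {U B W : ℝ → ℝ}

lemma continuousAt (hU : IsProfileSolution_s12 K m z₀ U) {z : ℝ} (hz : 0 < z) : ContinuousAt U z :=
  hU.continuousOn.continuousAt (Ioi_mem_nhds hz)

lemma integrableOn_mul_sub (hB : IsProfileSolution_s12 K m z₀ B) (hW : IsProfileSolution_s12 K m z₀ W)
    {z : ℝ} (hz : z₀ < z) : IntegrableOn (fun ρ => K z ρ * (B ρ - W ρ)) (Ioi z) := by
  refine ((hB.integrableOn z hz).sub (hW.integrableOn z hz)).congr_fun (fun ρ _ => ?_)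
    measurableSet_Ioi
  simp only [Pi.sub_apply, mul_sub]

lemma rpow_sub_rpow_eq (hB : IsProfileSolution_s12 K m z₀ B) (hW : IsProfileSolution_s12 K m z₀ W)
    {z : ℝ} (hz : z₀ < z) : B z ^ m - W z ^ m = ∫ ρ in Ioi z, K z ρ * (B ρ - W ρ) := by
  simp only [mul_sub]
  rw [integral_sub (hB.integrableOn z hz) (hW.integrableOn z hz), hB.rpow_eq z hz,
    hW.rpow_eq z hz]

lemma antitoneOn (hK : IsProfileKernel K) (hm : 0 < m) (hz₀ : 0 < z₀)
    (hU : IsProfileSolution_s12 K m z₀ U) : AntitoneOn U (Ici z₀) := by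
  have key : ∀ x y, z₀ < x → x ≤ y → U y ≤ U x := by
    intro x y hx hxy
    have hx₀ : 0 < x := hz₀.trans hx
    have hy : z₀ < y := hx.trans_le hxy
    rw [← Real.rpow_le_rpow_iff (hU.nonneg y (hx₀.trans_le hxy)) (hU.nonneg x hx₀) hm,
      hU.rpow_eq y hy, hU.rpow_eq x hx]
    calc ∫ ρ in Ioi y, K y ρ * U ρ ≤ ∫ ρ in Ioi y, K x ρ * U ρ :=
          setIntegral_mono_on (hU.integrableOn y hy)
            ((hU.integrableOn x hx).mono_set (Ioi_subset_Ioi hxy)) measurableSet_Ioi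
            fun ρ hρ => mul_le_mul_of_nonneg_right (hK.antitone_left hx₀ hxy hρ)
              (hU.nonneg ρ (hx₀.trans_le (hxy.trans hρ.le)))
      _ ≤ ∫ ρ in Ioi x, K x ρ * U ρ := by
          refine setIntegral_mono_set (hU.integrableOn x hx) ?_ (Ioi_subset_Ioi hxy).eventuallyLE
          filter_upwards [ae_restrict_mem measurableSet_Ioi] with ρ hρ
          exact mul_nonneg (hK.nonneg hx₀ hρ) (hU.nonneg ρ (hx₀.trans hρ))
  intro x hx y _ hxy
  rcases (mem_Ici.mp hx).eq_or_lt with rfl | hx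
  · rcases hxy.eq_or_lt with rfl | hxy
    · rfl
    exact le_of_forall_Ioo_le_of_continuousAt continuousAt_const (hU.continuousAt hz₀) hxy
      fun t ht => key t y ht.1 ht.2.le
  · exact key x y hx hxy

lemma rescale (hK : IsProfileKernel K) (hm : m ≠ 1) (hz₀ : 0 ≤ z₀)
    (hU : IsProfileSolution_s12 K m z₀ U) {l : ℝ} (hl : 1 ≤ l) :
    IsProfileSolution_s12 K m z₀ (profileRescale m l U) := by
  have hl₀ : 0 < l := one_pos.trans_le hl
  have hlz : ∀ z, z₀ < z → z₀ < l * z := fun z hz =>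
    hz.trans_le (le_mul_of_one_le_left (hz₀.trans hz.le) hl)
  have hmul : ∀ z, (fun ρ => K z ρ * profileRescale m l U ρ) =
      fun ρ => l ^ (-(2 / (m - 1))) * l⁻¹ * (K (l * z) (l * ρ) * U (l * ρ)) := by
    intro z
    ext ρ
    rw [hK.homogeneous hl₀, profileRescale]
    field_simp
  refine ⟨?_, fun z hz => ?_, fun z hz => ?_, fun z hz => ?_⟩
  · exact continuousOn_const.mul (hU.continuousOn.comp (continuous_const_mul l).continuousOn
      fun z hz => mul_pos hl₀ hz)
  · exact mul_nonneg (Real.rpow_nonneg hl₀.le _) (hU.nonneg _ (mul_pos hl₀ hz))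
  · rw [hmul]
    exact ((integrableOn_Ioi_comp_mul_left_iff (fun ρ => K (l * z) ρ * U ρ) z hl₀).mpr
      (hU.integrableOn _ (hlz z hz))).const_mul _
  · have hexp : -(2 / (m - 1)) * m = -(2 / (m - 1)) + -1 + -1 := by
      field_simp [sub_ne_zero.mpr hm]
      ring
    rw [hmul, integral_const_mul, integral_comp_mul_left_Ioi (fun ρ => K (l * z) ρ * U ρ) z hl₀,
      ← hU.rpow_eq _ (hlz z hz), profileRescale,
      Real.mul_rpow (Real.rpow_nonneg hl₀.le _) (hU.nonneg _ (mul_pos hl₀ (hz₀.trans_lt hz))),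
      ← Real.rpow_mul hl₀.le, hexp, Real.rpow_add hl₀, Real.rpow_add hl₀, Real.rpow_neg_one,
      smul_eq_mul]
    ring

lemma eqOn_Ici_of_le (hK : IsProfileKernel K) (hm : 0 ≤ m) (hz₀ : 0 < z₀)
    (hB : IsProfileSolution_s12 K m z₀ B) (hW : IsProfileSolution_s12 K m z₀ W) {z : ℝ} (hz : z₀ ≤ z)
    (hle : ∀ y, z ≤ y → W y ≤ B y) (heq : W z = B z) : ∀ y, z ≤ y → W y = B y := by
  intro y hy
  by_contra hne
  have hzy : z < y := hy.lt_of_ne (by rintro rfl; exact hne heq)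
  have hz0 : 0 < z := hz₀.trans_le hz
  obtain ⟨z₁, hzz₁, hz₁y⟩ := exists_between hzy
  obtain ⟨c, hc, hcle⟩ := hK.exists_pos_le_integral (f := fun x => B x - W x) (hz0.trans hzz₁)
    hz₁y ((hB.continuousAt (hz0.trans hzy)).sub (hW.continuousAt (hz0.trans hzy)))
    (sub_pos.mpr ((hle y hy).lt_of_ne hne))
  have hcont : ContinuousAt (fun x => B x ^ m - W x ^ m) z :=
    ((hB.continuousAt hz0).rpow_const (Or.inr hm)).sub
      ((hW.continuousAt hz0).rpow_const (Or.inr hm))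
  have hlim := le_of_forall_Ioo_le_of_continuousAt continuousAt_const hcont hzz₁ fun x hx => by
    have hx₀ : z₀ < x := hz.trans_lt hx.1
    rw [hB.rpow_sub_rpow_eq hW hx₀]
    exact hcle x (hz0.trans hx.1) hx.2.le
      (fun ρ hρ => sub_nonneg.mpr (hle ρ (hx.1.le.trans hρ.le))) (hB.integrableOn_mul_sub hW hx₀)
  simp only [heq, sub_self] at hlim
  linarith

lemma eq_of_le_of_eqOn_Ici (hK : IsProfileKernel K) (hm : 1 ≤ m) (hz₀ : 0 < z₀)
    (hB : IsProfileSolution_s12 K m z₀ B) (hW : IsProfileSolution_s12 K m z₀ W)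
    (hle : ∀ y, z₀ ≤ y → W y ≤ B y) {zb : ℝ} (hzb : z₀ < zb)
    (hWzb : 0 < W zb) (heq : ∀ y, zb ≤ y → B y = W y) : B z₀ = W z₀ := by
  set g := fun y => B y - W y
  have hgc : ContinuousOn g (Ioi 0) := hB.continuousOn.sub hW.continuousOn
  have hg₀ : ∀ y, z₀ ≤ y → 0 ≤ g y := fun y hy => sub_nonneg.mpr (hle y hy)
  obtain ⟨C, hC, hKC⟩ := hK.exists_upper_bound hz₀ hzb
  set c := m * W zb ^ (m - 1)
  have hc : 0 < c := mul_pos (by linarith) (Real.rpow_pos_of_pos hWzb _)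
  have hgle : ∀ y ∈ Ioc z₀ zb, g y ≤ C / c * ∫ ρ in y..zb, g ρ := by
    intro y hy
    have hy₀ : 0 < y := hz₀.trans hy.1
    have hWy : W zb ≤ W y := hW.antitoneOn hK (by linarith) hz₀ (mem_Ici.mpr hy.1.le)
      (mem_Ici.mpr hzb.le) hy.2
    rw [div_mul_eq_mul_div, le_div_iff₀' hc]
    calc c * g y ≤ B y ^ m - W y ^ m := mul_rpow_sub_one_mul_sub_le hm hWzb hWy (hle y hy.1.le)
      _ = ∫ ρ in Ioc y zb, K y ρ * g ρ := by
          rw [hB.rpow_sub_rpow_eq hW hy.1]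
          refine setIntegral_eq_of_subset_of_forall_sdiff_eq_zero measurableSet_Ioi
            Ioc_subset_Ioi_self fun ρ hρ => ?_
          simp [heq ρ (not_le.mp fun h => hρ.2 ⟨hρ.1, h⟩).le]
      _ ≤ ∫ ρ in Ioc y zb, C * g ρ := by
          refine setIntegral_mono_on
            ((hB.integrableOn_mul_sub hW hy.1).mono_set Ioc_subset_Ioi_self) ?_ measurableSet_Ioc
            fun ρ hρ => ?_
          · exact ((hgc.mono fun x hx => hy₀.trans_le hx.1).integrableOn_Icc.mono_set
              Ioc_subset_Icc_self).const_mul C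
          · exact mul_le_mul_of_nonneg_right (hKC y ρ hy.1.le hρ.1 hρ.2)
              (hg₀ ρ (hy.1.le.trans hρ.1.le))
      _ = C * ∫ ρ in y..zb, g ρ := by
          rw [integral_const_mul, intervalIntegral.integral_of_le hy.2]
  have hzero := eqOn_zero_of_le_mul_integral (hgc.mono fun y hy => hz₀.trans hy.1)
    (fun y hy => hg₀ y hy.1.le) (div_nonneg hC hc.le) hgle
  refine sub_eq_zero.mp (eq_of_forall_gt_eq_of_continuousAt (f := g)
    (hgc.continuousAt (Ioi_mem_nhds hz₀)) fun y hy => ?_)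
  rcases le_or_gt y zb with hyzb | hyzb
  · exact hzero y ⟨hy, hyzb⟩
  · exact sub_eq_zero.mpr (heq y hyzb.le)

lemma lt_of_le_of_lt_of_pos (hK : IsProfileKernel K) (hm : 1 ≤ m) (hz₀ : 0 < z₀)
    (hB : IsProfileSolution_s12 K m z₀ B) (hW : IsProfileSolution_s12 K m z₀ W)
    (hle : ∀ y, z₀ ≤ y → W y ≤ B y) (hlt : W z₀ < B z₀) {z : ℝ} (hz : z₀ ≤ z) (hWz : 0 < W z) :
    W z < B z := by
  refine (hle z hz).lt_of_ne fun heq => ?_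
  rcases hz.eq_or_lt with rfl | hz
  · exact hlt.ne heq
  have hEq := eqOn_Ici_of_le hK (by linarith) hz₀ hB hW hz.le
    (fun y hy => hle y (hz.le.trans hy)) heq
  exact hlt.ne' (hB.eq_of_le_of_eqOn_Ici hK hm hz₀ hW hle hz hWz fun y hy => (hEq y hy).symm)

lemma exists_support (hK : IsProfileKernel K) (hm : 0 < m) (hz₀ : 0 < z₀)
    (hU : IsProfileSolution_s12 K m z₀ U) (hU₀ : 0 < U z₀) {w : ℝ} (hw : z₀ ≤ w) (hUw : U w = 0) :
    ∃ ζ, z₀ < ζ ∧ ζ ≤ w ∧ (∀ z ∈ Ico z₀ ζ, 0 < U z) ∧ ∀ z, ζ ≤ z → U z = 0 := by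
  set S := {z | z₀ ≤ z ∧ U z = 0}
  have hne : S.Nonempty := ⟨w, hw, hUw⟩
  have hbdd : BddBelow S := ⟨z₀, fun z hz => hz.1⟩
  have hζ₀ : z₀ ≤ sInf S := le_csInf hne fun z hz => hz.1
  have hUζ : U (sInf S) = 0 := le_antisymm
    (ContinuousWithinAt.closure_le (csInf_mem_closure hne hbdd)
      (hU.continuousAt (hz₀.trans_le hζ₀)).continuousWithinAt continuousWithinAt_const
      fun z hz => hz.2.le)
    (hU.nonneg _ (hz₀.trans_le hζ₀))
  refine ⟨sInf S, hζ₀.lt_of_ne fun h => hU₀.ne' (h ▸ hUζ), csInf_le hbdd ⟨hw, hUw⟩,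
    fun z hz => (hU.nonneg z (hz₀.trans_le hz.1)).lt_of_ne fun h => ?_, fun z hz => ?_⟩
  · exact notMem_of_lt_csInf hz.2 hbdd ⟨hz.1, h.symm⟩
  · refine le_antisymm ?_ (hU.nonneg z (hz₀.trans_le (hζ₀.trans hz)))
    exact hUζ ▸ hU.antitoneOn hK hm hz₀ (mem_Ici.mpr hζ₀) (mem_Ici.mpr (hζ₀.trans hz)) hz

end IsProfileSolution_s12

section Slide

variable {m z₀ ζ : ℝ} {V B : ℝ → ℝ}

lemma eventually_forall_profileRescale_le (hV : ContinuousOn V (Ioi 0))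
    (hB : ContinuousOn B (Ioi 0)) (hB₀ : ∀ z, 0 < z → 0 ≤ B z) (hVζ : ∀ z, ζ ≤ z → V z = 0)
    (hz₀ : 0 < z₀) (hζ : 0 < ζ) {l : ℝ} (hl : 1 < l)
    (hlt : ∀ z ∈ Ico z₀ ζ, profileRescale m l V z < B z) :
    ∀ᶠ l' in nhds l, ∀ z, z₀ ≤ z → profileRescale m l' V z ≤ B z := by
  have hl₀ : 0 < l := one_pos.trans hl
  obtain ⟨ζ', hζ'l, hζ'ζ⟩ := exists_between (div_lt_self hζ hl)
  have hζ' : 0 < ζ' := (div_pos hζ hl₀).trans hζ'l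
  have hnear : ∀ᶠ l' in nhds l, ∀ z ∈ Icc z₀ ζ', profileRescale m l' V z < B z := by
    refine isCompact_Icc.eventually_forall_of_forall_eventually fun z hz => ?_
    have hz0 : 0 < z := hz₀.trans_le hz.1
    refine ContinuousAt.eventually_lt (f := fun p : ℝ × ℝ => profileRescale m p.1 V p.2)
      (g := fun p => B p.2) ?_ ((hB.continuousAt (Ioi_mem_nhds hz0)).comp continuousAt_snd)
      (hlt z ⟨hz.1, hz.2.trans_lt hζ'ζ⟩)
    exact (continuousAt_fst.rpow_const (Or.inl hl₀.ne')).mul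
      ((hV.continuousAt (Ioi_mem_nhds (mul_pos hl₀ hz0))).comp (f := fun p : ℝ × ℝ => p.1 * p.2)
        (continuousAt_fst.mul continuousAt_snd))
  have hfar : ∀ᶠ l' in nhds l, ζ / ζ' < l' := lt_mem_nhds ((div_lt_iff₀ hζ').mpr (by
    rw [div_lt_iff₀ hl₀] at hζ'l; linarith))
  filter_upwards [hnear, hfar] with l' hnear hfar z hz
  rcases le_or_gt z ζ' with hzζ' | hzζ'
  · exact (hnear z ⟨hz, hzζ'⟩).le
  have hl' : 0 < l' := (div_pos hζ hζ').trans hfar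
  rw [profileRescale, hVζ, mul_zero]
  · exact hB₀ z (hz₀.trans_le hz)
  · calc ζ ≤ l' * ζ' := ((div_lt_iff₀ hζ').mp hfar).le
      _ ≤ l' * z := by gcongr

lemma eventually_atTop_forall_profileRescale_le (hm : 1 < m) (hz₀ : 0 < z₀) (hζ : z₀ < ζ)
    (hVanti : AntitoneOn V (Ici z₀)) (hVζ : ∀ z, ζ ≤ z → V z = 0) (hB : ContinuousOn B (Ioi 0))
    (hB₀ : ∀ z, 0 < z → 0 ≤ B z) (hBpos : ∀ z ∈ Ico z₀ ζ, 0 < B z) :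
    ∀ᶠ l in atTop, ∀ z, z₀ ≤ z → profileRescale m l V z ≤ B z := by
  obtain ⟨ζ', hz₀ζ', hζ'ζ⟩ := exists_between hζ
  have hζ' : 0 < ζ' := hz₀.trans hz₀ζ'
  obtain ⟨x, hx, hmin⟩ := isCompact_Icc.exists_isMinOn (nonempty_Icc.mpr hz₀ζ'.le)
    (hB.mono fun z hz => hz₀.trans_le hz.1)
  have hsmall : Tendsto (fun l : ℝ => l ^ (-(2 / (m - 1))) * V z₀) atTop (nhds 0) := by
    simpa using (tendsto_rpow_neg_atTop (div_pos two_pos (sub_pos.mpr hm))).mul_const (V z₀)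
  filter_upwards [hsmall.eventually (gt_mem_nhds (hBpos x ⟨hx.1, hx.2.trans_lt hζ'ζ⟩)),
    eventually_ge_atTop 1, eventually_ge_atTop (ζ / ζ')] with l hlV hl1 hlζ z hz
  have hl : 0 < l := one_pos.trans_le hl1
  rcases le_or_gt z ζ' with hzζ' | hzζ'
  · calc profileRescale m l V z ≤ l ^ (-(2 / (m - 1))) * V z₀ :=
          mul_le_mul_of_nonneg_left (hVanti (mem_Ici.mpr le_rfl)
            (mem_Ici.mpr (hz.trans (le_mul_of_one_le_left (hz₀.trans_le hz).le hl1)))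
            (hz.trans (le_mul_of_one_le_left (hz₀.trans_le hz).le hl1)))
            (Real.rpow_nonneg hl.le _)
      _ ≤ B x := hlV.le
      _ ≤ B z := hmin ⟨hz, hzζ'⟩
  rw [profileRescale, hVζ, mul_zero]
  · exact hB₀ z (hz₀.trans_le hz)
  · calc ζ ≤ l * ζ' := (div_le_iff₀ hζ').mp hlζ
      _ ≤ l * z := by gcongr

end Slide

namespace IsProfileSolution_s12

variable {K : ℝ → ℝ → ℝ} {m z₀ ζ : ℝ} {V B : ℝ → ℝ}

lemma le_of_eq_of_support (hK : IsProfileKernel K) (hm : 1 < m) (hz₀ : 0 < z₀)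
    (hV : IsProfileSolution_s12 K m z₀ V) (hB : IsProfileSolution_s12 K m z₀ B) (hval : V z₀ = B z₀)
    (hζ : z₀ < ζ) (hVpos : ∀ z ∈ Ico z₀ ζ, 0 < V z) (hVζ : ∀ z, ζ ≤ z → V z = 0)
    (hBpos : ∀ z ∈ Ico z₀ ζ, 0 < B z) : ∀ z, z₀ ≤ z → V z ≤ B z := by
  have hVanti := hV.antitoneOn hK (by linarith) hz₀
  set Λ := {l : ℝ | 1 ≤ l ∧ ∀ z, z₀ ≤ z → profileRescale m l V z ≤ B z}
  have hne : Λ.Nonempty :=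
    (((eventually_atTop_forall_profileRescale_le hm hz₀ hζ hVanti hVζ hB.continuousOn hB.nonneg
      hBpos).and (eventually_ge_atTop 1)).exists).imp fun l h => ⟨h.2, h.1⟩
  have hbdd : BddBelow Λ := ⟨1, fun l hl => hl.1⟩
  have hls : 1 ≤ sInf Λ := le_csInf hne fun l hl => hl.1
  have hls₀ : 0 < sInf Λ := one_pos.trans_le hls
  have hmem : ∀ z, z₀ ≤ z → profileRescale m (sInf Λ) V z ≤ B z := fun z hz =>
    ContinuousWithinAt.closure_le (f := fun l => profileRescale m l V z) (g := fun _ => B z)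
      (csInf_mem_closure hne hbdd)
      ((continuousAt_id.rpow_const (Or.inl hls₀.ne')).mul ((hV.continuousAt
        (mul_pos hls₀ (hz₀.trans_le hz))).comp (f := fun l => l * z)
        (continuousAt_id.mul continuousAt_const))).continuousWithinAt
      continuousWithinAt_const fun l (hl : l ∈ Λ) => hl.2 z hz
  rcases hls.eq_or_lt with hls | hls
  · simpa [profileRescale, ← hls] using hmem
  exfalso
  have hW := hV.rescale hK (by linarith) hz₀.le hls.le
  have hlt₀ : profileRescale m (sInf Λ) V z₀ < B z₀ :=
    calc profileRescale m (sInf Λ) V z₀ ≤ sInf Λ ^ (-(2 / (m - 1))) * V z₀ :=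
          mul_le_mul_of_nonneg_left (hVanti (mem_Ici.mpr le_rfl)
            (mem_Ici.mpr (le_mul_of_one_le_left hz₀.le hls.le))
            (le_mul_of_one_le_left hz₀.le hls.le)) (Real.rpow_nonneg hls₀.le _)
      _ < 1 * V z₀ := mul_lt_mul_of_pos_right (Real.rpow_lt_one_of_one_lt_of_neg hls
          (neg_neg_of_pos (div_pos two_pos (sub_pos.mpr hm)))) (hVpos z₀ ⟨le_rfl, hζ⟩)
      _ = B z₀ := by rw [one_mul, hval]
  have hstrict : ∀ z ∈ Ico z₀ ζ, profileRescale m (sInf Λ) V z < B z := by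
    intro z hz
    by_cases hlz : sInf Λ * z < ζ
    · refine hB.lt_of_le_of_lt_of_pos hK hm.le hz₀ hW hmem hlt₀ hz.1
        (mul_pos (Real.rpow_pos_of_pos hls₀ _) (hVpos _ ⟨?_, hlz⟩))
      exact hz.1.trans (le_mul_of_one_le_left (hz₀.trans_le hz.1).le hls.le)
    · rw [profileRescale, hVζ _ (not_lt.mp hlz), mul_zero]
      exact hBpos z hz
  obtain ⟨l, hlΛ, hl⟩ := (((eventually_forall_profileRescale_le hV.continuousOn hB.continuousOn
    hB.nonneg hVζ hz₀ (hz₀.trans hζ) hls hstrict).filter_mono nhdsWithin_le_nhds).and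
    (Ioo_mem_nhdsLT hls)).exists
  exact (csInf_le hbdd ⟨hl.1.le, hlΛ⟩).not_gt hl.2

lemma eqOn_of_eq_of_vanishing (hK : IsProfileKernel K) (hm : 1 < m) (hz₀ : 0 < z₀)
    (hV : IsProfileSolution_s12 K m z₀ V) (hB : IsProfileSolution_s12 K m z₀ B) (hval : V z₀ = B z₀)
    (hV₀ : 0 < V z₀) {w : ℝ} (hw : z₀ ≤ w) (hVw : V w = 0) : ∀ z, z₀ ≤ z → V z = B z := by
  obtain ⟨ζ, hζ, -, hVpos, hVζ⟩ := hV.exists_support hK (by linarith) hz₀ hV₀ hw hVw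
  by_cases hBpos : ∀ z ∈ Ico z₀ ζ, 0 < B z
  · exact eqOn_Ici_of_le hK (by linarith) hz₀ hB hV le_rfl
      (hV.le_of_eq_of_support hK hm hz₀ hB hval hζ hVpos hVζ hBpos) hval
  push Not at hBpos
  obtain ⟨w', hw', hBw'⟩ := hBpos
  obtain ⟨ζ', hζ', hζ'w', hBpos', hBζ'⟩ := hB.exists_support hK (by linarith) hz₀ (hval ▸ hV₀)
    hw'.1 (le_antisymm hBw' (hB.nonneg w' (hz₀.trans_le hw'.1)))
  have hle := hB.le_of_eq_of_support hK hm hz₀ hV hval.symm hζ' hBpos' hBζ'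
    fun z hz => hVpos z ⟨hz.1, hz.2.trans_le (hζ'w'.trans hw'.2.le)⟩
  exact fun z hz => (eqOn_Ici_of_le hK (by linarith) hz₀ hV hB le_rfl hle hval.symm z hz).symm

end IsProfileSolution_s12

theorem forward_uniqueness_general (d : ℕ) (α m b : ℝ)
    (hα : α ∈ Set.Ioo (0:ℝ) 1)
    (hm : 1 < m)
    (hb : b = α / (2 + (d:ℝ) * (m - 1)))
    (z₀ : ℝ) (hz₀ : 0 < z₀)
    (U₁ U₂ : ℝ → ℝ)
    (hc₁ : ContinuousOn U₁ (Set.Ioi 0)) (hc₂ : ContinuousOn U₂ (Set.Ioi 0))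
    (hpos₁ : ∀ z, 0 < z → 0 ≤ U₁ z) (hpos₂ : ∀ z, 0 < z → 0 ≤ U₂ z)
    (hsol₁ : ∀ z, z₀ < z →
      MeasureTheory.IntegrableOn (fun ρ => Kker d α b z ρ * U₁ ρ) (Set.Ioi z) ∧
      U₁ z ^ m = ∫ ρ in Set.Ioi z, Kker d α b z ρ * U₁ ρ)
    (hsol₂ : ∀ z, z₀ < z →
      MeasureTheory.IntegrableOn (fun ρ => Kker d α b z ρ * U₂ ρ) (Set.Ioi z) ∧
      U₂ z ^ m = ∫ ρ in Set.Ioi z, Kker d α b z ρ * U₂ ρ)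
    (R : ℝ) (hR : z₀ < R)
    (hsupp : closure {z : ℝ | 0 < z ∧ U₁ z ≠ 0} = Set.Icc 0 R)
    (hval : U₁ z₀ = U₂ z₀) :
    ∀ z, z₀ ≤ z → U₁ z = U₂ z := by
  obtain ⟨hα₀, hα₁⟩ := hα
  have hden : 2 ≤ 2 + (d : ℝ) * (m - 1) := le_add_of_nonneg_right (by positivity)
  have hK := isProfileKernel_Kker (d := d) hα₀.le hα₁ (b := b) (by rw [hb]; positivity)
    (by rw [hb, div_le_one (by linarith)]; linarith)
  have hU₁ : IsProfileSolution_s12 (Kker d α b) m z₀ U₁ :=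
    ⟨hc₁, hpos₁, fun z hz => (hsol₁ z hz).1, fun z hz => (hsol₁ z hz).2⟩
  have hU₂ : IsProfileSolution_s12 (Kker d α b) m z₀ U₂ :=
    ⟨hc₂, hpos₂, fun z hz => (hsol₂ z hz).1, fun z hz => (hsol₂ z hz).2⟩
  have hsub : {z : ℝ | 0 < z ∧ U₁ z ≠ 0} ⊆ Icc 0 R := hsupp ▸ subset_closure
  have hU₁R : U₁ (R + 1) = 0 := by
    by_contra h
    linarith [(hsub ⟨by linarith, h⟩).2]
  have hU₁z₀ : 0 < U₁ z₀ := by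
    refine (hpos₁ z₀ hz₀).lt_of_ne fun h => ?_
    have hsmall : {z : ℝ | 0 < z ∧ U₁ z ≠ 0} ⊆ Icc 0 z₀ := fun z ⟨hz, hUz⟩ =>
      ⟨hz.le, not_lt.mp fun hz₀z => hUz (le_antisymm (h ▸ hU₁.antitoneOn hK (by linarith) hz₀
        (mem_Ici.mpr le_rfl) (mem_Ici.mpr hz₀z.le) hz₀z.le) (hpos₁ z hz))⟩
    have := (closure_minimal hsmall isClosed_Icc) (hsupp ▸ right_mem_Icc.mpr (by linarith))
    linarith [this.2]
  exact hU₁.eqOn_of_eq_of_vanishing hK hm hz₀ hU₂ hval hU₁z₀ (by linarith) hU₁R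

/-- forward uniqueness in the slow-diffusion range `m > 1`. If two
continuous nonnegative solutions of the profile integral equation on `(z₀,∞)` agree at
`z₀`, and the first has support `[0,R]` with `R ∈ (z₀,∞)`, then they agree on `[z₀,∞)`. -/
theorem forward_uniqueness (d : ℕ) (hd : 1 ≤ d) (α m b : ℝ)
    (hα : α ∈ Set.Ioo (0:ℝ) 1)
    (hm : 1 < m)
    (hb : b = α / (2 + (d:ℝ) * (m - 1)))
    (z₀ : ℝ) (hz₀ : 0 < z₀)
    (U₁ U₂ : ℝ → ℝ)
    (hc₁ : ContinuousOn U₁ (Set.Ioi 0)) (hc₂ : ContinuousOn U₂ (Set.Ioi 0))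
    (hpos₁ : ∀ z, 0 < z → 0 ≤ U₁ z) (hpos₂ : ∀ z, 0 < z → 0 ≤ U₂ z)
    (hsol₁ : ∀ z, z₀ < z →
      MeasureTheory.IntegrableOn (fun ρ => Kker d α b z ρ * U₁ ρ) (Set.Ioi z) ∧
      U₁ z ^ m = ∫ ρ in Set.Ioi z, Kker d α b z ρ * U₁ ρ)
    (hsol₂ : ∀ z, z₀ < z →
      MeasureTheory.IntegrableOn (fun ρ => Kker d α b z ρ * U₂ ρ) (Set.Ioi z) ∧
      U₂ z ^ m = ∫ ρ in Set.Ioi z, Kker d α b z ρ * U₂ ρ)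
    (R : ℝ) (hR : z₀ < R)
    (hsupp : closure {z : ℝ | 0 < z ∧ U₁ z ≠ 0} = Set.Icc 0 R)
    (hval : U₁ z₀ = U₂ z₀) :
    ∀ z, z₀ ≤ z → U₁ z = U₂ z :=
  forward_uniqueness_general d α m b hα hm hb z₀ hz₀ U₁ U₂ hc₁ hc₂ hpos₁ hpos₂ hsol₁ hsol₂ R hR
    hsupp hval
end
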